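/- arXiv:2501.07406 — 6 statements merged into one kernel-verified Lean document; each statement's English description precedes it below -/
import Mathlib

section
/- Let n,k ≥ 1 and let (a,b) be ADHM data. Then there exist Q ∈ Sp(n+k) and K ∈ GL(k,ℝ) such that Q·b·K⁻¹ = U (where U = [0; I_k]) and the lower k×k block M of M̂ := Q·a·K⁻¹ is symmetric (Mᵀ = M); that is, every ADHM data is gauge equivalent to ADHM data in standard form. -/
open Matrix

noncomputable section

abbrev ℍ := Quaternion ℝ

/-- The quaternion `i`. -/
def qi : ℍ := ⟨0, 1, 0, 0⟩
/-- The quaternion `j`. -/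
def qj : ℍ := ⟨0, 0, 1, 0⟩
/-- The quaternion `k`. -/
def qk : ℍ := ⟨0, 0, 0, 1⟩

/-- `e^{iθ} = cos θ + i sin θ` as a quaternion. -/
def eI (θ : ℝ) : ℍ := ⟨Real.cos θ, Real.sin θ, 0, 0⟩

/-- Entrywise right multiplication of a quaternionic matrix by a quaternion scalar. -/
def rsmul {I J : Type*} (A : Matrix I J ℍ) (x : ℍ) : Matrix I J ℍ := A.map (· * x)

/-- Entrywise left multiplication of a quaternionic matrix by a quaternion scalar. -/
def lsmul {I J : Type*} (x : ℍ) (A : Matrix I J ℍ) : Matrix I J ℍ := A.map (x * ·)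

/-- A quaternionic matrix is real if each entry lies in `ℝ ⊆ ℍ`. -/
def IsRealMatrix {I J : Type*} (A : Matrix I J ℍ) : Prop :=
  ∀ i j, A i j = ((A i j).re : ℍ)

/-- Positive definiteness: `v† A v` is a positive real for every nonzero `v`. -/
def IsPosDefQ {I : Type*} [Fintype I] (A : Matrix I I ℍ) : Prop :=
  ∀ v : I → ℍ, v ≠ 0 → ∃ r : ℝ, 0 < r ∧ star v ⬝ᵥ A.mulVec v = (r : ℍ)

/-- Membership in the compact symplectic group `Sp`. -/
def IsSp {I : Type*} [Fintype I] [DecidableEq I] (Q : Matrix I I ℍ) : Prop := Qᴴ * Q = 1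

/-- Inclusion of real matrices into quaternionic matrices. -/
def qmap {I J : Type*} (K : Matrix I J ℝ) : Matrix I J ℍ := K.map (fun r => (r : ℍ))

/-- The matrix `U = [0; I_k]`. -/
def Uh (n k : ℕ) : Matrix (Fin n ⊕ Fin k) (Fin k) ℍ := Matrix.fromRows 0 1

/-- The matrix `M̂ = [L; M]`. -/
def Mh {n k : ℕ} (L : Matrix (Fin n) (Fin k) ℍ) (M : Matrix (Fin k) (Fin k) ℍ) :
    Matrix (Fin n ⊕ Fin k) (Fin k) ℍ := Matrix.fromRows L M

/-- `Δ(x) = a − b·x`. -/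
def Delta {n k : ℕ} (a b : Matrix (Fin n ⊕ Fin k) (Fin k) ℍ) (x : ℍ) :
    Matrix (Fin n ⊕ Fin k) (Fin k) ℍ := a - rsmul b x

/-- ADHM data: `b` has full column rank and `Δ(x)†Δ(x)` is real positive definite for all `x`. -/
def IsADHM {n k : ℕ} (a b : Matrix (Fin n ⊕ Fin k) (Fin k) ℍ) : Prop :=
  (∀ v : Fin k → ℍ, b.mulVec v = 0 → v = 0) ∧
  ∀ x : ℍ, IsRealMatrix ((Delta a b x)ᴴ * Delta a b x) ∧
    IsPosDefQ ((Delta a b x)ᴴ * Delta a b x)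

/-- Membership of `M̂ = [L; M]` in `M_{n,k}`. -/
def InM {n k : ℕ} (L : Matrix (Fin n) (Fin k) ℍ) (M : Matrix (Fin k) (Fin k) ℍ) : Prop :=
  Mᵀ = M ∧ IsPosDefQ (L * Lᴴ) ∧
  IsRealMatrix (Lᴴ * L + Mᴴ * M) ∧ IsUnit (Lᴴ * L + Mᴴ * M) ∧
  ∀ x : ℍ, IsUnit ((Delta (Mh L M) (Uh n k) x)ᴴ * Delta (Mh L M) (Uh n k) x)

/-- The gaugeAct action of `(Q, K) ∈ Sp(n+k) × GL(k,ℝ)` on an `(n+k)×k` matrix. -/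
def gaugeAct {n k : ℕ} (Q : Matrix (Fin n ⊕ Fin k) (Fin n ⊕ Fin k) ℍ)
    (K : Matrix (Fin k) (Fin k) ℝ) (a : Matrix (Fin n ⊕ Fin k) (Fin k) ℍ) :
    Matrix (Fin n ⊕ Fin k) (Fin k) ℍ :=
  Q * a * qmap K⁻¹

/-- The conformal action of a 2×2 quaternionic matrix on a pair of `(n+k)×k` matrices. -/
def confAct {n k : ℕ} (A : Matrix (Fin 2) (Fin 2) ℍ)
    (p : Matrix (Fin n ⊕ Fin k) (Fin k) ℍ × Matrix (Fin n ⊕ Fin k) (Fin k) ℍ) :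
    Matrix (Fin n ⊕ Fin k) (Fin k) ℍ × Matrix (Fin n ⊕ Fin k) (Fin k) ℍ :=
  (rsmul p.1 (A 1 1) - rsmul p.2 (A 0 1), rsmul p.2 (A 0 0) - rsmul p.1 (A 1 0))

/-- `M̂` is `Ã`-equivariant: some gaugeAct transformation undoes the conformal action of `Ã`. -/
def Equivariant {n k : ℕ} (L : Matrix (Fin n) (Fin k) ℍ) (M : Matrix (Fin k) (Fin k) ℍ)
    (A : Matrix (Fin 2) (Fin 2) ℍ) : Prop :=
  ∃ (Q : Matrix (Fin n ⊕ Fin k) (Fin n ⊕ Fin k) ℍ) (K : Matrix (Fin k) (Fin k) ℝ),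
    IsSp Q ∧ IsUnit K ∧
    gaugeAct Q K (confAct A (Mh L M, Uh n k)).1 = Mh L M ∧
    gaugeAct Q K (confAct A (Mh L M, Uh n k)).2 = Uh n k

/-- Circular `t`-symmetry: equivariance under `diag(e^{iθ}, e^{tiθ})` for all `θ`. -/
def CircularSym {n k : ℕ} (L : Matrix (Fin n) (Fin k) ℍ) (M : Matrix (Fin k) (Fin k) ℍ)
    (t : ℝ) : Prop :=
  ∀ θ : ℝ, Equivariant L M !![eI θ, 0; 0, eI (t * θ)]

/-- Toral symmetry: equivariance under `diag(e^{iφ₁}, e^{iφ₂})` for all `φ₁, φ₂`. -/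
def ToralSym {n k : ℕ} (L : Matrix (Fin n) (Fin k) ℍ) (M : Matrix (Fin k) (Fin k) ℍ) : Prop :=
  ∀ φ₁ φ₂ : ℝ, Equivariant L M !![eI φ₁, 0; 0, eI φ₂]

namespace ADHMproof
set_option linter.unusedSectionVars false

/-! ### Real quaternions -/

def RealQ (z : ℍ) : Prop := z.imI = 0 ∧ z.imJ = 0 ∧ z.imK = 0

lemma realQ_iff (z : ℍ) : z = ((z.re : ℝ) : ℍ) ↔ RealQ z := by
  constructor
  · intro h; refine ⟨?_, ?_, ?_⟩ <;> rw [h] <;> simp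
  · rintro ⟨h1, h2, h3⟩; ext <;> simp [h1, h2, h3]

lemma realQ_coe (r : ℝ) : RealQ (r : ℍ) := by refine ⟨?_, ?_, ?_⟩ <;> simp

lemma realQ_zero : RealQ (0 : ℍ) := ⟨rfl, rfl, rfl⟩

lemma realQ_sub {z w : ℍ} (hz : RealQ z) (hw : RealQ w) : RealQ (z - w) := by
  obtain ⟨a1,a2,a3⟩ := hz; obtain ⟨b1,b2,b3⟩ := hw
  refine ⟨?_, ?_, ?_⟩ <;> simp [a1,a2,a3,b1,b2,b3]

lemma realQ_add {z w : ℍ} (hz : RealQ z) (hw : RealQ w) : RealQ (z + w) := by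
  obtain ⟨a1,a2,a3⟩ := hz; obtain ⟨b1,b2,b3⟩ := hw
  refine ⟨?_, ?_, ?_⟩ <;> simp [a1,a2,a3,b1,b2,b3]

lemma realQ_half {z : ℍ} (h : RealQ (z + z)) : RealQ z := by
  obtain ⟨a1,a2,a3⟩ := h
  simp only [Quaternion.imI_add, Quaternion.imJ_add, Quaternion.imK_add] at a1 a2 a3
  refine ⟨?_, ?_, ?_⟩ <;> linarith

lemma qi_re : qi.re = 0 := rfl
lemma qi_imI : qi.imI = 1 := rfl
lemma qi_imJ : qi.imJ = 0 := rfl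
lemma qi_imK : qi.imK = 0 := rfl
lemma qj_re : qj.re = 0 := rfl
lemma qj_imI : qj.imI = 0 := rfl
lemma qj_imJ : qj.imJ = 1 := rfl
lemma qj_imK : qj.imK = 0 := rfl
lemma qk_re : qk.re = 0 := rfl
lemma qk_imI : qk.imI = 0 := rfl
lemma qk_imJ : qk.imJ = 0 := rfl
lemma qk_imK : qk.imK = 1 := rfl

lemma sym_of_real (p q : ℍ) (h1 : RealQ (star q * 1 + star (1:ℍ) * p))
    (h2 : RealQ (star q * qi + star qi * p)) : p = q := by
  obtain ⟨a1,a2,a3⟩ := h1; obtain ⟨b1,b2,b3⟩ := h2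
  simp only [Quaternion.imI_mul, Quaternion.imJ_mul, Quaternion.imK_mul, Quaternion.re_mul,
    Quaternion.re_star, Quaternion.imI_star, Quaternion.imJ_star, Quaternion.imK_star,
    qi_re, qi_imI, qi_imJ, qi_imK, one_mul, mul_one, Quaternion.imI_add, Quaternion.imJ_add,
    Quaternion.imK_add, Quaternion.re_one, Quaternion.imI_one, Quaternion.imJ_one,
    Quaternion.imK_one] at a1 a2 a3 b1 b2 b3
  ext <;> simp_all <;> linarith

lemma isRealMatrix_entry {I J : Type*} {M : Matrix I J ℍ} (h : IsRealMatrix M) (i : I) (j : J) :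
    RealQ (M i j) := (realQ_iff _).mp (h i j)

lemma eq_qmap_of_isReal {I J : Type*} {M : Matrix I J ℍ} (h : IsRealMatrix M) :
    M = qmap (M.map QuaternionAlgebra.re) :=
  Matrix.ext fun i j => h i j

lemma realQ_qmap {I J : Type*} (S : Matrix I J ℝ) (i : I) (j : J) : RealQ (qmap S i j) :=
  realQ_coe _

/-! ### qmap is a ring hom -/

def qcoe : ℝ →+* ℍ := algebraMap ℝ ℍ

lemma qmap_eq {I J : Type*} (K : Matrix I J ℝ) : qmap K = K.map qcoe := rfl

lemma qmap_mul {I J L : Type*} [Fintype J] (A : Matrix I J ℝ) (B : Matrix J L ℝ) :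
    qmap (A * B) = qmap A * qmap B := by
  rw [qmap_eq, qmap_eq, qmap_eq, Matrix.map_mul]

lemma qmap_one {I : Type*} [Fintype I] [DecidableEq I] : qmap (1 : Matrix I I ℝ) = 1 := by
  rw [qmap_eq, Matrix.map_one qcoe (map_zero _) (map_one _)]

lemma qmap_conjTranspose {I J : Type*} (K : Matrix I J ℝ) : (qmap K)ᴴ = qmap Kᵀ := by
  refine Matrix.ext fun i j => ?_
  rw [Matrix.conjTranspose_apply]
  simp [qmap, Matrix.map_apply, Quaternion.star_coe]

/-! ### quaternionic inner products -/

variable {I : Type*} [Fintype I] [DecidableEq I]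

def qip (u v : I → ℍ) : ℍ := ∑ l, star (u l) * v l

def rsv (u : I → ℍ) (x : ℍ) : I → ℍ := fun l => u l * x

lemma qip_rsv_right (u v : I → ℍ) (x : ℍ) : qip u (rsv v x) = qip u v * x := by
  simp [qip, rsv, Finset.sum_mul, mul_assoc]

lemma qip_rsv_left (u v : I → ℍ) (x : ℍ) : qip (rsv u x) v = star x * qip u v := by
  simp [qip, rsv, Finset.mul_sum, mul_assoc, StarMul.star_mul]

lemma qip_conj (u v : I → ℍ) : qip u v = star (qip v u) := by
  simp [qip, star_sum, StarMul.star_mul]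

lemma qip_sub_right (u v w : I → ℍ) : qip u (v - w) = qip u v - qip u w := by
  simp [qip, mul_sub, Finset.sum_sub_distrib]

lemma qip_sum_right {σ : Type*} (s : Finset σ) (u : I → ℍ) (f : σ → I → ℍ) :
    qip u (∑ t ∈ s, f t) = ∑ t ∈ s, qip u (f t) := by
  simp [qip, Finset.mul_sum]
  rw [Finset.sum_comm]

lemma qip_self (u : I → ℍ) : qip u u = ((∑ l, Quaternion.normSq (u l) : ℝ) : ℍ) := by
  simp only [qip, Quaternion.star_mul_self]
  have hc : ∀ r : ℝ, ((r : ℍ)) = algebraMap ℝ ℍ r := fun r => rfl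
  simp only [hc, ← map_sum]

lemma qip_self_pos {u : I → ℍ} (hu : u ≠ 0) : 0 < ∑ l, Quaternion.normSq (u l) := by
  obtain ⟨l0, hl0⟩ : ∃ l, u l ≠ 0 := by
    by_contra hc; push_neg at hc; exact hu (funext hc)
  have h0 : 0 < Quaternion.normSq (u l0) :=
    lt_of_le_of_ne (Quaternion.normSq_nonneg) (fun h => hl0 (Quaternion.normSq_eq_zero.mp h.symm))
  exact Finset.sum_pos' (fun l _ => Quaternion.normSq_nonneg) ⟨l0, Finset.mem_univ _, h0⟩

/-! ### Extension to an orthonormal basis -/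

def qbasis : Fin 4 → ℍ := ![1, qi, qj, qk]

lemma quat_decomp (x : ℍ) :
    x = x.re • qbasis 0 + x.imI • qbasis 1 + x.imJ • qbasis 2 + x.imK • qbasis 3 := by
  ext <;> simp [qbasis, qi_re, qi_imI, qi_imJ, qi_imK, qj_re, qj_imI, qj_imJ, qj_imK, qk_re, qk_imI,
    qk_imJ, qk_imK, Quaternion.re_one, Quaternion.imI_one, Quaternion.imJ_one,
    Quaternion.imK_one, Quaternion.re_smul, smul_eq_mul]

lemma rsv_mem_span {ι : Type*} [Fintype ι] (v : ι → I → ℍ) (s : ι) (x : ℍ) :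
    rsv (v s) x ∈ Submodule.span ℝ
      (Set.range fun p : ι × Fin 4 => rsv (v p.1) (qbasis p.2)) := by
  have hadd : ∀ (u : I → ℍ) (a b : ℍ), rsv u (a + b) = rsv u a + rsv u b := by
    intro u a b; funext l; simp [rsv, mul_add]
  have hsmul : ∀ (u : I → ℍ) (r : ℝ) (a : ℍ), rsv u (r • a) = r • rsv u a := by
    intro u r a; funext l; simp [rsv, mul_smul_comm]
  rw [quat_decomp x, hadd, hadd, hadd, hsmul, hsmul, hsmul, hsmul]
  have hmem : ∀ c : Fin 4, rsv (v s) (qbasis c) ∈ Submodule.span ℝ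
      (Set.range fun p : ι × Fin 4 => rsv (v p.1) (qbasis p.2)) :=
    fun c => Submodule.subset_span ⟨(s, c), rfl⟩
  exact Submodule.add_mem _ (Submodule.add_mem _ (Submodule.add_mem _
    (Submodule.smul_mem _ _ (hmem 0)) (Submodule.smul_mem _ _ (hmem 1)))
    (Submodule.smul_mem _ _ (hmem 2))) (Submodule.smul_mem _ _ (hmem 3))

lemma extend_one {ι : Type*} [Fintype ι] [DecidableEq ι] (v : ι → I → ℍ)
    (hv : ∀ s t, qip (v s) (v t) = if s = t then 1 else 0)
    (hcard : Fintype.card ι < Fintype.card I) :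
    ∃ w : I → ℍ, qip w w = 1 ∧ ∀ s, qip (v s) w = 0 := by
  classical
  set W := Submodule.span ℝ (Set.range fun p : ι × Fin 4 => rsv (v p.1) (qbasis p.2)) with hW
  have hrank : Module.finrank ℝ (I → ℍ) = 4 * Fintype.card I := by
    rw [Module.finrank_pi_fintype ℝ]
    simp [Quaternion.finrank_eq_four, mul_comm]
  have hWlt : Module.finrank ℝ W < Module.finrank ℝ (I → ℍ) := by
    calc Module.finrank ℝ W ≤ Fintype.card (ι × Fin 4) := finrank_range_le_card _
    _ = 4 * Fintype.card ι := by simp [Fintype.card_prod, mul_comm]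
    _ < 4 * Fintype.card I := by omega
    _ = Module.finrank ℝ (I → ℍ) := hrank.symm
  have hWne : W ≠ ⊤ := by
    intro h
    rw [h, finrank_top] at hWlt
    exact lt_irrefl _ hWlt
  obtain ⟨u, hu⟩ : ∃ u, u ∉ W := by
    by_contra hc; push_neg at hc
    exact hWne (Submodule.eq_top_iff'.mpr hc)
  set w' : I → ℍ := u - ∑ s, rsv (v s) (qip (v s) u) with hw'
  have horth : ∀ t, qip (v t) w' = 0 := by
    intro t
    rw [hw', qip_sub_right, qip_sum_right]
    have h2 : ∀ s, qip (v t) (rsv (v s) (qip (v s) u))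
        = (if t = s then 1 else 0) * qip (v s) u := by
      intro s; rw [qip_rsv_right, hv]
    rw [Finset.sum_congr rfl (fun s _ => h2 s)]
    simp
  have hw'ne : w' ≠ 0 := by
    intro h0
    apply hu
    have hu' : u = ∑ s, rsv (v s) (qip (v s) u) := by
      have h1 := sub_eq_zero.mp h0
      exact h1
    rw [hu']
    exact Submodule.sum_mem _ (fun s _ => rsv_mem_span v s _)
  set r := ∑ l, Quaternion.normSq (w' l) with hr
  have hrpos : 0 < r := qip_self_pos hw'ne
  have hs : Real.sqrt r * Real.sqrt r = r := Real.mul_self_sqrt hrpos.le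
  have hsne : Real.sqrt r ≠ 0 := ne_of_gt (Real.sqrt_pos.mpr hrpos)
  set c : ℝ := (Real.sqrt r)⁻¹ with hc
  have h1 : c * (r * c) = 1 := by
    rw [hc, ← hs]; field_simp
    rw [Real.sqrt_sq (Real.sqrt_nonneg r)]
  refine ⟨rsv w' (c : ℍ), ?_, ?_⟩
  · rw [qip_rsv_left, qip_rsv_right, qip_self w', Quaternion.star_coe, ← hr]
    rw [← Quaternion.coe_mul, ← Quaternion.coe_mul, h1, Quaternion.coe_one]
  · intro s
    rw [qip_rsv_right, horth s, zero_mul]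

lemma extend_many (m : ℕ) : ∀ {ι : Type} [Fintype ι] [DecidableEq ι] (v : ι → I → ℍ),
    (∀ s t, qip (v s) (v t) = if s = t then 1 else 0) →
    m + Fintype.card ι ≤ Fintype.card I →
    ∃ d : Fin m → I → ℍ,
      (∀ s t, qip (d s) (d t) = if s = t then 1 else 0) ∧
      (∀ s t, qip (v s) (d t) = 0) := by
  induction m with
  | zero =>
    intro ι _ _ v hv hcard
    exact ⟨fun s => 0, fun s => s.elim0, fun s t => t.elim0⟩
  | succ m ih =>
    intro ι _ _ v hv hcard
    obtain ⟨w, hww, hvw⟩ := extend_one v hv (by omega)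
    set v' : ι ⊕ Unit → I → ℍ := Sum.elim v (fun _ => w) with hv'def
    have hv' : ∀ s t, qip (v' s) (v' t) = if s = t then 1 else 0 := by
      rintro (s | s) (t | t)
      · simpa [hv'def] using hv s t
      · simpa [hv'def] using hvw s
      · simp only [hv'def, Sum.elim_inl, Sum.elim_inr]
        rw [qip_conj]
        simp [hvw t]
      · simp [hv'def, hww]
    obtain ⟨d, hdd, hvd⟩ := ih v' hv' (by simp; omega)
    refine ⟨Fin.cons w d, ?_, ?_⟩
    · intro s t
      refine Fin.cases ?_ ?_ s <;> [skip; intro s'] <;> refine Fin.cases ?_ ?_ t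
      · simpa using hww
      · intro t'; simpa [hv'def, (Fin.succ_ne_zero t').symm] using hvd (Sum.inr ()) t'
      · rw [qip_conj]
        have h := hvd (Sum.inr ()) s'
        simp only [hv'def, Sum.elim_inr] at h
        simp [h, Fin.succ_ne_zero]
      · intro t'
        have := hdd s' t'
        simpa [Fin.succ_inj] using this
    · intro s t
      refine Fin.cases ?_ ?_ t
      · simpa using hvw s
      · intro t'; simpa [hv'def] using hvd (Sum.inl s) t'

/-! ### Dedekind-finiteness of quaternionic matrices -/

lemma mul_eq_one_comm_H {N : Type*} [Fintype N] [DecidableEq N]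
    {A B : Matrix N N ℍ} (h : A * B = 1) : B * A = 1 := by
  have hfin : FiniteDimensional ℝ (Matrix N N ℍ) := by infer_instance
  let f : Matrix N N ℍ →ₗ[ℝ] Matrix N N ℍ := LinearMap.mulLeft ℝ B
  have hinj : Function.Injective f := by
    intro X Y hXY
    have h2 : B * X = B * Y := hXY
    have h3 : A * (B * X) = A * (B * Y) := by rw [h2]
    simpa [← Matrix.mul_assoc, h] using h3
  obtain ⟨Y, hY⟩ := (LinearMap.injective_iff_surjective.mp hinj) 1
  have hBY : B * Y = 1 := hY
  have hYA : Y = A := by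
    calc Y = 1 * Y := (one_mul Y).symm
    _ = (A * B) * Y := by rw [h]
    _ = A * (B * Y) := by rw [Matrix.mul_assoc]
    _ = A := by rw [hBY, mul_one]
  rw [← hYA]; exact hBY

/-! ### Completing an isometry to a symplectic matrix -/

lemma exists_sp (n k : ℕ) (C : Matrix (Fin n ⊕ Fin k) (Fin k) ℍ) (hC : Cᴴ * C = 1) :
    ∃ Q : Matrix (Fin n ⊕ Fin k) (Fin n ⊕ Fin k) ℍ, Qᴴ * Q = 1 ∧ Q * C = Uh n k := by
  have hcols : ∀ i j : Fin k, qip (fun l => C l i) (fun l => C l j) = if i = j then 1 else 0 := by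
    intro i j
    have h := congrFun (congrFun hC i) j
    simpa [qip, Matrix.mul_apply, Matrix.conjTranspose_apply, Matrix.one_apply] using h
  obtain ⟨d, hdd, hcd⟩ := extend_many n (fun j => fun l => C l j) hcols
    (by simp [Fintype.card_sum])
  set P : Matrix (Fin n ⊕ Fin k) (Fin n ⊕ Fin k) ℍ :=
    Matrix.of (fun l r => Sum.elim (fun s => d s l) (fun j => C l j) r) with hP
  have hPP : Pᴴ * P = 1 := by
    refine Matrix.ext fun r r' => ?_
    have hentry : (Pᴴ * P) r r' = qip (fun l => P l r) (fun l => P l r') := by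
      simp [Matrix.mul_apply, Matrix.conjTranspose_apply, qip]
    rw [hentry]
    rcases r with s | i <;> rcases r' with t | j
    · simpa [hP, Matrix.one_apply, Sum.inl.injEq] using hdd s t
    · rw [qip_conj]
      have h := hcd j s
      simp only [hP, Matrix.of_apply, Sum.elim_inl, Sum.elim_inr]
      simpa [Matrix.one_apply] using congrArg star h
    · simpa [hP, Matrix.one_apply] using hcd i t
    · simpa [hP, Matrix.one_apply, Sum.inr.injEq] using hcols i j
  have hPPt : P * Pᴴ = 1 := mul_eq_one_comm_H hPP
  refine ⟨Pᴴ, by rw [Matrix.conjTranspose_conjTranspose]; exact hPPt, ?_⟩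
  have hCP : C = P * Uh n k := by
    refine Matrix.ext fun l j => ?_
    simp [hP, Uh, Matrix.mul_apply, Fintype.sum_sum_type, Matrix.one_apply]
  rw [hCP, ← Matrix.mul_assoc, hPP, Matrix.one_mul]

/-! ### Entry expansion of `Δ(x)ᴴΔ(x)` when `b = U` -/

lemma entry_expand {n k : ℕ} (A : Matrix (Fin n ⊕ Fin k) (Fin k) ℍ) (x : ℍ) (i j : Fin k) :
    ((Delta A (Uh n k) x)ᴴ * Delta A (Uh n k) x) i j
      = (Aᴴ * A) i j - star (A (Sum.inr j) i) * x - star x * A (Sum.inr i) j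
        + (if i = j then star x * x else 0) := by
  have hΔl : ∀ (s : Fin n) (c : Fin k), Delta A (Uh n k) x (Sum.inl s) c = A (Sum.inl s) c := by
    intro s c; simp [Delta, Uh, rsmul, Matrix.fromRows_apply_inl, Matrix.zero_apply]
  have hΔr : ∀ (t c : Fin k), Delta A (Uh n k) x (Sum.inr t) c
      = A (Sum.inr t) c - (if t = c then x else 0) := by
    intro t c
    simp only [Delta, Uh, rsmul, Matrix.sub_apply, Matrix.map_apply, Matrix.fromRows_apply_inr,
      Matrix.one_apply, ite_mul, one_mul, zero_mul]
  rw [Matrix.mul_apply, Matrix.mul_apply, Fintype.sum_sum_type, Fintype.sum_sum_type]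
  simp only [Matrix.conjTranspose_apply, hΔl, hΔr]
  have e1 : (∑ t : Fin k, star (A (Sum.inr t) i) * (if t = j then x else 0))
      = star (A (Sum.inr j) i) * x := by
    simp [mul_ite, Finset.sum_ite_eq']
  have e2 : (∑ t : Fin k, star (if t = i then x else 0) * A (Sum.inr t) j)
      = star x * A (Sum.inr i) j := by
    simp [apply_ite (star : ℍ → ℍ), ite_mul, Finset.sum_ite_eq']
  have e3 : (∑ t : Fin k, star (if t = i then x else 0) * (if t = j then x else 0))
      = if i = j then star x * x else 0 := by
    simp only [apply_ite (star : ℍ → ℍ), star_zero, ite_mul, zero_mul, mul_ite, mul_zero]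
    rw [Finset.sum_ite_eq' Finset.univ j]
    simp [eq_comm]
  simp only [star_sub, sub_mul, mul_sub, Finset.sum_sub_distrib, e1, e2, e3]
  abel

/-! ### rsmul interactions -/

lemma rsmul_mul_left {I J L : Type*} [Fintype J] (Q : Matrix I J ℍ) (M : Matrix J L ℍ) (x : ℍ) :
    rsmul (Q * M) x = Q * rsmul M x := by
  refine Matrix.ext fun i j => ?_
  simp [rsmul, Matrix.mul_apply, Finset.sum_mul, mul_assoc]

lemma rsmul_mul_qmap {I J L : Type*} [Fintype J] (M : Matrix I J ℍ) (S : Matrix J L ℝ) (x : ℍ) :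
    rsmul (M * qmap S) x = rsmul M x * qmap S := by
  refine Matrix.ext fun i j => ?_
  simp only [rsmul, Matrix.map_apply, Matrix.mul_apply, Finset.sum_mul, qmap]
  refine Finset.sum_congr rfl fun l _ => ?_
  rw [mul_assoc, mul_assoc, Quaternion.coe_commutes]

end ADHMproof

open ADHMproof

set_option maxHeartbeats 1000000

/-- Every ADHM data is gauge equivalent to ADHM data in standard form:
`Q b K⁻¹ = U` and the lower `k×k` block of `Q a K⁻¹` is symmetric. -/
theorem stmt1 {n k : ℕ} (hn : 1 ≤ n) (hk : 1 ≤ k)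
    (a b : Matrix (Fin n ⊕ Fin k) (Fin k) ℍ) (h : IsADHM a b) :
    ∃ (Q : Matrix (Fin n ⊕ Fin k) (Fin n ⊕ Fin k) ℍ) (K : Matrix (Fin k) (Fin k) ℝ),
      IsSp Q ∧ IsUnit K ∧
      gaugeAct Q K b = Uh n k ∧
      (∀ i j : Fin k, gaugeAct Q K a (Sum.inr i) j = gaugeAct Q K a (Sum.inr j) i) := by
  classical
  obtain ⟨hb, hD⟩ := h
  -- `bᴴ * b` is real
  have hd1 : Delta a b 1 = a - b := by
    refine Matrix.ext fun l c => ?_; simp [Delta, rsmul]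
  have hdm1 : Delta a b (-1) = a + b := by
    refine Matrix.ext fun l c => ?_; simp [Delta, rsmul, sub_neg_eq_add]
  have hd0 : Delta a b 0 = a := by
    refine Matrix.ext fun l c => ?_; simp [Delta, rsmul]
  have hsum2 : bᴴ * b + bᴴ * b
      = ((a - b)ᴴ * (a - b) + (a + b)ᴴ * (a + b)) - (aᴴ * a + aᴴ * a) := by
    rw [Matrix.conjTranspose_sub, Matrix.conjTranspose_add, Matrix.sub_mul, Matrix.add_mul,
      Matrix.mul_sub, Matrix.mul_sub, Matrix.mul_add, Matrix.mul_add]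
    abel
  have hrealbb : ∀ i j, RealQ ((bᴴ * b) i j) := by
    intro i j
    have r1 := isRealMatrix_entry ((hD 1).1) i j
    have rm1 := isRealMatrix_entry ((hD (-1)).1) i j
    have r0 := isRealMatrix_entry ((hD 0).1) i j
    rw [hd1] at r1; rw [hdm1] at rm1; rw [hd0] at r0
    apply realQ_half
    have he : (bᴴ * b) i j + (bᴴ * b) i j
        = (((a - b)ᴴ * (a - b)) i j + ((a + b)ᴴ * (a + b)) i j)
          - ((aᴴ * a) i j + (aᴴ * a) i j) := by
      have h2 := congrFun (congrFun hsum2 i) j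
      simpa using h2
    rw [he]
    exact realQ_sub (realQ_add r1 rm1) (realQ_add r0 r0)
  -- the real matrix G
  set G : Matrix (Fin k) (Fin k) ℝ := (bᴴ * b).map (fun z : ℍ => z.re) with hGdef
  have hqmapG : qmap G = bᴴ * b := by
    refine Matrix.ext fun i j => ?_
    exact ((realQ_iff _).mpr (hrealbb i j)).symm
  have hherm : (bᴴ * b)ᴴ = bᴴ * b := by
    rw [Matrix.conjTranspose_mul, Matrix.conjTranspose_conjTranspose]
  have hGsym : Gᵀ = G := by
    refine Matrix.ext fun i j => ?_
    have h1 : (bᴴ * b) j i = star ((bᴴ * b) i j) := by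
      conv_lhs => rw [← hherm]
      rw [Matrix.conjTranspose_apply]
    simp [hGdef, Matrix.transpose_apply, Matrix.map_apply, h1]
  -- positive definiteness of G
  have hquad : ∀ v : Fin k → ℝ, v ≠ 0 → 0 < star v ⬝ᵥ G *ᵥ v := by
    intro v hv
    set v' : Fin k → ℍ := fun i => ((v i : ℝ) : ℍ) with hv'
    have hv'ne : v' ≠ 0 := by
      intro h0; apply hv; funext i
      have h2 := congrFun h0 i
      have h3 : ((v i : ℝ) : ℍ) = ((0 : ℝ) : ℍ) := by simpa [hv'] using h2
      exact Quaternion.coe_injective h3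
    have hbv : b *ᵥ v' ≠ 0 := fun h0 => hv'ne (hb v' h0)
    set V : Matrix (Fin k) (Fin 1) ℝ := Matrix.replicateCol (Fin 1) v with hV
    have hm : (b * qmap V)ᴴ * (b * qmap V) = qmap (Vᵀ * G * V) := by
      rw [Matrix.conjTranspose_mul, qmap_conjTranspose]
      simp only [Matrix.mul_assoc]
      rw [← Matrix.mul_assoc bᴴ b, hqmapG.symm]
      rw [← qmap_mul, ← qmap_mul]
    have hcol : (fun l => (b * qmap V) l 0) = b *ᵥ v' := by
      funext l
      simp [Matrix.mul_apply, Matrix.mulVec, dotProduct, qmap, hV, hv']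
    have hentry : ((b * qmap V)ᴴ * (b * qmap V)) 0 0
        = qip (fun l => (b * qmap V) l 0) (fun l => (b * qmap V) l 0) := by
      simp [Matrix.mul_apply, Matrix.conjTranspose_apply, qip]
    have hVGV : (Vᵀ * G * V) 0 0 = star v ⬝ᵥ G *ᵥ v := by
      simp only [Matrix.mul_apply, Matrix.mulVec, dotProduct, hV, Matrix.transpose_apply,
        Matrix.replicateCol_apply, Finset.sum_mul, Finset.mul_sum]
      rw [Finset.sum_comm]
      exact Finset.sum_congr rfl fun p _ => Finset.sum_congr rfl fun q _ => by simp only [star_trivial]; ring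
    have hq : ((star v ⬝ᵥ G *ᵥ v : ℝ) : ℍ)
        = ((∑ l, Quaternion.normSq ((b *ᵥ v') l) : ℝ) : ℍ) := by
      rw [← hVGV]
      have h3 := congrFun (congrFun hm 0) 0
      rw [hentry, hcol, qip_self] at h3
      exact h3.symm.trans rfl
    have hr : star v ⬝ᵥ G *ᵥ v = ∑ l, Quaternion.normSq ((b *ᵥ v') l) :=
      Quaternion.coe_injective hq
    rw [hr]
    exact qip_self_pos hbv
  have hGherm : G.IsHermitian := by
    have h2 : Gᴴ = Gᵀ := Matrix.ext fun i j => by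
      rw [Matrix.conjTranspose_apply, Matrix.transpose_apply]; exact star_trivial _
    rw [Matrix.IsHermitian, h2, hGsym]
  have hGpd : G.PosDef := Matrix.posDef_iff_dotProduct_mulVec.mpr ⟨hGherm, hquad⟩
  -- the square root K of G
  have hGpsd := hGpd.posSemidef
  open scoped MatrixOrder in set K := CFC.sqrt G with hK
  have hKK : K * K = G := by
    open scoped MatrixOrder in exact CFC.sqrt_mul_sqrt_self G hGpsd.nonneg
  have hKherm : K.IsHermitian := by
    open scoped MatrixOrder in exact (CFC.sqrt_nonneg G).posSemidef.1
  have hKsym : Kᵀ = K := by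
    have h2 : Kᴴ = Kᵀ := Matrix.ext fun i j => by
      rw [Matrix.conjTranspose_apply, Matrix.transpose_apply]; exact star_trivial _
    rw [← h2]; exact hKherm
  have hKdet : IsUnit K.det := by
    have h2 : K.det * K.det = G.det := by rw [← Matrix.det_mul, hKK]
    have h3 : 0 < G.det := hGpd.det_pos
    refine isUnit_iff_ne_zero.mpr fun h0 => ?_
    rw [h0, zero_mul] at h2
    rw [← h2] at h3
    exact lt_irrefl 0 h3
  have hKunit : IsUnit K := (Matrix.isUnit_iff_isUnit_det K).mpr hKdet
  have hKiK : K⁻¹ * K = 1 := Matrix.nonsing_inv_mul K hKdet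
  have hKKi : K * K⁻¹ = 1 := Matrix.mul_nonsing_inv K hKdet
  have hKisym : (K⁻¹)ᵀ = K⁻¹ := by rw [Matrix.transpose_nonsing_inv, hKsym]
  have hGinv : K⁻¹ * G * K⁻¹ = 1 := by
    rw [← hKK, ← Matrix.mul_assoc, Matrix.mul_assoc K⁻¹ K K]
    rw [← Matrix.mul_assoc, hKiK, Matrix.one_mul, hKKi]
  -- the isometry C and the symplectic Q
  set C := b * qmap K⁻¹ with hCdef
  have hC1 : Cᴴ * C = 1 := by
    rw [hCdef, Matrix.conjTranspose_mul, qmap_conjTranspose, hKisym]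
    simp only [Matrix.mul_assoc]
    rw [← Matrix.mul_assoc bᴴ b, hqmapG.symm, ← qmap_mul, ← qmap_mul, ← Matrix.mul_assoc,
      hGinv, qmap_one]
  obtain ⟨Q, hQsp, hQC⟩ := exists_sp n k C hC1
  have hgb : gaugeAct Q K b = Uh n k := by
    rw [gaugeAct, Matrix.mul_assoc, ← hCdef]; exact hQC
  refine ⟨Q, K, hQsp, hKunit, hgb, ?_⟩
  set A' := gaugeAct Q K a with hA'
  have hDelta' : ∀ x : ℍ, Delta A' (Uh n k) x = Q * Delta a b x * qmap K⁻¹ := by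
    intro x
    rw [Delta, hA', ← hgb, gaugeAct, gaugeAct, rsmul_mul_qmap, rsmul_mul_left, Delta]
    rw [Matrix.mul_sub, Matrix.sub_mul]
  have hreal' : ∀ x : ℍ, IsRealMatrix ((Delta A' (Uh n k) x)ᴴ * Delta A' (Uh n k) x) := by
    intro x
    rw [hDelta' x]
    have hR := eq_qmap_of_isReal ((hD x).1)
    set Rx := ((Delta a b x)ᴴ * Delta a b x).map QuaternionAlgebra.re with hRx
    have hcalc : (Q * Delta a b x * qmap K⁻¹)ᴴ * (Q * Delta a b x * qmap K⁻¹)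
        = qmap ((K⁻¹)ᵀ * Rx * K⁻¹) := by
      rw [Matrix.conjTranspose_mul, Matrix.conjTranspose_mul, qmap_conjTranspose]
      simp only [Matrix.mul_assoc]
      rw [← Matrix.mul_assoc Qᴴ Q, hQsp, Matrix.one_mul]
      rw [← Matrix.mul_assoc (Delta a b x)ᴴ (Delta a b x), hR, ← qmap_mul, ← qmap_mul]
    rw [hcalc]
    intro i j
    exact (realQ_iff _).mpr (realQ_qmap _ i j)
  intro i j
  have hx : ∀ x : ℍ, RealQ (star (A' (Sum.inr j) i) * x + star x * A' (Sum.inr i) j) := by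
    intro x
    have hEx := isRealMatrix_entry (hreal' x) i j
    have hE0 := isRealMatrix_entry (hreal' 0) i j
    rw [entry_expand] at hEx hE0
    have hA0 : RealQ ((A'ᴴ * A') i j) := by simpa using hE0
    have hite : RealQ (if i = j then star x * x else 0) := by
      split_ifs
      · rw [Quaternion.star_mul_self]; exact realQ_coe _
      · exact realQ_zero
    have hrw : star (A' (Sum.inr j) i) * x + star x * A' (Sum.inr i) j
        = (((A'ᴴ * A') i j) + (if i = j then star x * x else 0))
          - ((A'ᴴ * A') i j - star (A' (Sum.inr j) i) * x - star x * A' (Sum.inr i) j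
              + (if i = j then star x * x else 0)) := by abel
    rw [hrw]
    exact realQ_sub (realQ_add hA0 hite) hEx
  exact sym_of_real (A' (Sum.inr i) j) (A' (Sum.inr j) i) (hx 1) (hx qi)
end
end

section
/- Let M̂ = [1; 0] ∈ M_{1,1} be the ADHM data of the basic instanton (L = (1), M = (0)). Let à be a 2×2 quaternionic matrix with entries A,B,C,D satisfying the SL(2,ℍ) condition: |AC⁻¹DC − BC| = 1 if C ≠ 0, and |AD| = 1 if C = 0 (|·| the quaternion norm). Then M̂ is Ã-equivariant if and only if Ã†Ã = I₂, i.e. if and only if à ∈ Sp(2). -/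
open Matrix

noncomputable section

namespace Stmt2Aux
open Quaternion

lemma normSq_eq_one_of_norm_eq_one {q : ℍ} (h : ‖q‖ = 1) : normSq q = 1 := by
  rw [normSq_eq_norm_mul_self, h, one_mul]

lemma r_eq_one {r : ℝ} (hr : 0 < r) (h : r * r = 1) : r = 1 := by
  have h2 : (r - 1) * (r + 1) = 0 := by linear_combination h
  rcases mul_eq_zero.mp h2 with h | h
  · linarith
  · linarith

lemma qkey {A B C D : ℍ} {r : ℝ} (hr : 0 < r)
    (h1 : normSq A + normSq C = r) (h2 : normSq B + normSq D = r)
    (h3 : star B * A + star D * C = 0) :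
    normSq D + normSq C = r ∧ normSq B + normSq A = r ∧ D * star B + C * star A = 0 := by
  by_cases hC : C = 0
  · subst hC
    simp only [mul_zero, add_zero, _root_.map_zero] at h3 h1 ⊢
    have hA : A ≠ 0 := by
      intro h; rw [h, _root_.map_zero] at h1; linarith
    have hB : B = 0 := by
      rcases mul_eq_zero.mp h3 with h | h
      · simpa using star_eq_zero.mp h
      · exact absurd h hA
    subst hB
    simp only [_root_.map_zero, zero_add, add_zero, zero_mul] at h2 ⊢
    exact ⟨h2, h1, by simp⟩
  · have hCs : (star C : ℍ) ≠ 0 := star_ne_zero.mpr hC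
    have h3' : star D * C = -(star B * A) := by
      rw [eq_neg_iff_add_eq_zero, add_comm]; exact h3
    have hsD : star D = -(star B * A) * C⁻¹ := (eq_mul_inv_iff_mul_eq₀ hC).mpr h3'
    have hD : D = -((star C)⁻¹ * star A * B) := by
      calc D = star (star D) := by rw [star_star]
        _ = star (-(star B * A) * C⁻¹) := by rw [hsD]
        _ = -((star C)⁻¹ * star A * B) := by
            simp [StarMul.star_mul, star_inv₀, mul_assoc]
    have hcne : normSq C ≠ 0 := normSq_ne_zero.mpr hC
    have hnd : normSq D = normSq A * normSq B / normSq C := by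
      rw [hD]
      simp only [normSq_neg, _root_.map_mul, map_inv₀, normSq_star]
      ring
    have hb : normSq B = normSq C := by
      rw [hnd] at h2
      field_simp at h2
      have e : normSq B * r = normSq C * r := by linear_combination h2 - normSq B * h1
      exact mul_right_cancel₀ (ne_of_gt hr) e
    have hd : normSq D = normSq A := by
      rw [hnd, hb]; field_simp
    refine ⟨by linarith, by linarith, ?_⟩
    have hBB : B * star B = ((normSq B : ℝ) : ℍ) := self_mul_star B
    have key : (star C)⁻¹ * star A * B * star B = C * star A := by
      calc (star C)⁻¹ * star A * B * star B
          = (star C)⁻¹ * (star A * (B * star B)) := by rw [mul_assoc, mul_assoc]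
        _ = (star C)⁻¹ * (star A * ((normSq C : ℝ) : ℍ)) := by rw [hBB, hb]
        _ = (star C)⁻¹ * (((normSq C : ℝ) : ℍ) * star A) := by rw [← coe_commutes]
        _ = (star C)⁻¹ * (star C * C * star A) := by rw [star_mul_self]
        _ = C * star A := by
            rw [mul_assoc (star C) C (star A), ← mul_assoc, inv_mul_cancel₀ hCs, one_mul]
    rw [hD, neg_mul, key, neg_add_cancel]

lemma qrone {A B C D : ℍ} {r : ℝ} (hr : 0 < r)
    (h1 : normSq A + normSq C = r) (h2 : normSq B + normSq D = r)
    (h3 : star B * A + star D * C = 0)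
    (hSL₁ : C ≠ 0 → ‖A * C⁻¹ * D * C - B * C‖ = 1)
    (hSL₂ : C = 0 → ‖A * D‖ = 1) : r = 1 := by
  by_cases hC : C = 0
  · have hAD := normSq_eq_one_of_norm_eq_one (hSL₂ hC)
    subst hC
    simp only [mul_zero, add_zero, _root_.map_zero] at h3 h1
    have hA : A ≠ 0 := by intro h; rw [h, _root_.map_zero] at h1; linarith
    have hB : B = 0 := by
      rcases mul_eq_zero.mp h3 with h | h
      · simpa using star_eq_zero.mp h
      · exact absurd h hA
    subst hB
    simp only [_root_.map_zero, zero_add] at h2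
    rw [_root_.map_mul, h1, h2] at hAD
    exact r_eq_one hr hAD
  · have hCs : (star C : ℍ) ≠ 0 := star_ne_zero.mpr hC
    have h3' : star D * C = -(star B * A) := by
      rw [eq_neg_iff_add_eq_zero, add_comm]; exact h3
    have hsD : star D = -(star B * A) * C⁻¹ := (eq_mul_inv_iff_mul_eq₀ hC).mpr h3'
    have hD : D = -((star C)⁻¹ * star A * B) := by
      calc D = star (star D) := by rw [star_star]
        _ = star (-(star B * A) * C⁻¹) := by rw [hsD]
        _ = -((star C)⁻¹ * star A * B) := by simp [StarMul.star_mul, star_inv₀, mul_assoc]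
    have hcne : normSq C ≠ 0 := normSq_ne_zero.mpr hC
    have hcpos : 0 < normSq C := lt_of_le_of_ne (normSq_nonneg) (Ne.symm hcne)
    have hnd : normSq D = normSq A * normSq B / normSq C := by
      rw [hD]; simp only [normSq_neg, _root_.map_mul, map_inv₀, normSq_star]; ring
    have hb : normSq B = normSq C := by
      rw [hnd] at h2
      field_simp at h2
      have e : normSq B * r = normSq C * r := by linear_combination h2 - normSq B * h1
      exact mul_right_cancel₀ (ne_of_gt hr) e
    have hAA : A * star A = ((normSq A : ℝ) : ℍ) := self_mul_star A
    have hinv : C⁻¹ * (star C)⁻¹ = (((normSq C)⁻¹ : ℝ) : ℍ) := by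
      rw [← _root_.mul_inv_rev, star_mul_self]
      norm_cast
    have hX : A * C⁻¹ * D * C - B * C = -(((r / normSq C : ℝ) : ℍ) * (B * C)) := by
      rw [hD]
      have step1 : A * C⁻¹ * -((star C)⁻¹ * star A * B) * C
          = -(A * (C⁻¹ * (star C)⁻¹) * star A * (B * C)) := by
        noncomm_ring
      rw [step1, hinv]
      have c1 : A * (((normSq C)⁻¹ : ℝ) : ℍ) * star A
          = (((normSq A * (normSq C)⁻¹ : ℝ)) : ℍ) := by
        rw [← coe_commutes, mul_assoc, hAA, ← coe_mul]
        congr 1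
        ring
      have step2 : A * (((normSq C)⁻¹ : ℝ) : ℍ) * star A * (B * C)
          = (((normSq A * (normSq C)⁻¹ : ℝ)) : ℍ) * (B * C) := by
        rw [c1]
      rw [step2]
      have step3 : ((r / normSq C : ℝ) : ℍ)
          = ((normSq A * (normSq C)⁻¹ : ℝ) : ℍ) + 1 := by
        rw [← coe_one, ← coe_add]
        congr 1
        field_simp
        linarith
      rw [step3, add_mul, one_mul, neg_add, sub_eq_add_neg]
    have hXnorm := normSq_eq_one_of_norm_eq_one (hSL₁ hC)
    rw [hX, normSq_neg, _root_.map_mul, _root_.map_mul, normSq_coe, hb] at hXnorm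
    have hrr : r * r = 1 := by
      have e : (r / normSq C) ^ 2 * (normSq C * normSq C) = r * r := by
        field_simp
      rw [e] at hXnorm
      exact hXnorm
    exact r_eq_one hr hrr

lemma aux2 (p q : ℍ) (κ : ℝ) :
    star (p * (κ:ℍ)) * (q * (κ:ℍ)) = ((κ^2:ℝ):ℍ) * (star p * q) := by
  rw [StarMul.star_mul, star_coe]
  calc (κ:ℍ) * star p * (q * (κ:ℍ))
      = (κ:ℍ) * (star p * q * (κ:ℍ)) := by
        rw [mul_assoc, mul_assoc]
    _ = (κ:ℍ) * ((κ:ℍ) * (star p * q)) := by rw [← coe_commutes]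
    _ = ((κ^2:ℝ):ℍ) * (star p * q) := by rw [← mul_assoc, ← coe_mul, ← pow_two]

lemma gram_entry (v w : Matrix (Fin 1 ⊕ Fin 1) (Fin 1) ℍ) :
    (vᴴ * w) 0 0 = star (v (Sum.inl 0) 0) * w (Sum.inl 0) 0
      + star (v (Sum.inr 0) 0) * w (Sum.inr 0) 0 := by
  simp [Matrix.mul_apply, Fintype.sum_sum_type, Matrix.conjTranspose_apply]

lemma mulqmap (v : Matrix (Fin 1 ⊕ Fin 1) (Fin 1) ℍ) (K : Matrix (Fin 1) (Fin 1) ℝ)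
    (i : Fin 1 ⊕ Fin 1) : (v * qmap K) i 0 = v i 0 * ((K 0 0 : ℝ) : ℍ) := by
  simp [qmap, Matrix.mul_apply]

lemma colmul_entry (v w : Matrix (Fin 1 ⊕ Fin 1) (Fin 1) ℍ) (i j : Fin 1 ⊕ Fin 1) :
    (v * wᴴ) i j = v i 0 * star (w j 0) := by
  simp [Matrix.mul_apply, Matrix.conjTranspose_apply]

lemma qmap_one : qmap (1 : Matrix (Fin 1) (Fin 1) ℝ) = 1 :=
  Matrix.map_one _ coe_zero coe_one

lemma coe_eq_one {r : ℝ} (h : ((r:ℝ):ℍ) = 1) : r = 1 := by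
  apply coe_injective
  rw [coe_one]; exact h

lemma coe_sum_eq_one {s t : ℝ} (h : ((s:ℝ):ℍ) + ((t:ℝ):ℍ) = 1) : s + t = 1 := by
  rw [← coe_add] at h
  apply coe_injective
  rw [coe_one]; exact h

lemma v1_inl (At : Matrix (Fin 2) (Fin 2) ℍ) :
    (confAct At (Mh (1 : Matrix (Fin 1) (Fin 1) ℍ) 0, Uh 1 1)).1 (Sum.inl 0) 0 = At 1 1 := by
  simp [confAct, rsmul, Mh, Uh, Matrix.one_apply]

lemma v1_inr (At : Matrix (Fin 2) (Fin 2) ℍ) :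
    (confAct At (Mh (1 : Matrix (Fin 1) (Fin 1) ℍ) 0, Uh 1 1)).1 (Sum.inr 0) 0 = -(At 0 1) := by
  simp [confAct, rsmul, Mh, Uh, Matrix.one_apply]

lemma v2_inl (At : Matrix (Fin 2) (Fin 2) ℍ) :
    (confAct At (Mh (1 : Matrix (Fin 1) (Fin 1) ℍ) 0, Uh 1 1)).2 (Sum.inl 0) 0 = -(At 1 0) := by
  simp [confAct, rsmul, Mh, Uh, Matrix.one_apply]

lemma v2_inr (At : Matrix (Fin 2) (Fin 2) ℍ) :
    (confAct At (Mh (1 : Matrix (Fin 1) (Fin 1) ℍ) 0, Uh 1 1)).2 (Sum.inr 0) 0 = At 0 0 := by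
  simp [confAct, rsmul, Mh, Uh, Matrix.one_apply]

lemma MhMh : ((Mh (1 : Matrix (Fin 1) (Fin 1) ℍ) 0)ᴴ * (Mh (1 : Matrix (Fin 1) (Fin 1) ℍ) 0)) 0 0
    = 1 := by
  simp [Matrix.mul_apply, Fintype.sum_sum_type, Mh, Matrix.one_apply]

lemma UhUh : ((Uh 1 1)ᴴ * (Uh 1 1)) 0 0 = 1 := by
  simp [Matrix.mul_apply, Fintype.sum_sum_type, Uh, Matrix.one_apply]

lemma UhMh : ((Uh 1 1)ᴴ * (Mh (1 : Matrix (Fin 1) (Fin 1) ℍ) 0)) 0 0 = 0 := by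
  simp [Matrix.mul_apply, Fintype.sum_sum_type, Mh, Uh, Matrix.one_apply]

end Stmt2Aux

set_option maxHeartbeats 1600000 in
/-- The basic instanton `M̂ = [1; 0] ∈ M_{1,1}` is `At`-equivariant for
`At ∈ SL(2,ℍ)` if and only if `At ∈ Sp(2)`. -/
theorem stmt2 (At : Matrix (Fin 2) (Fin 2) ℍ)
    (hSL₁ : At 1 0 ≠ 0 → ‖At 0 0 * (At 1 0)⁻¹ * At 1 1 * At 1 0 - At 0 1 * At 1 0‖ = 1)
    (hSL₂ : At 1 0 = 0 → ‖At 0 0 * At 1 1‖ = 1) :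
    Equivariant (1 : Matrix (Fin 1) (Fin 1) ℍ) (0 : Matrix (Fin 1) (Fin 1) ℍ) At ↔
      Atᴴ * At = 1 := by
  open Stmt2Aux Quaternion in
  constructor
  · rintro ⟨Q, K, hQ, hK, hM, hU⟩
    have hQ' : Qᴴ * Q = 1 := hQ
    have hM' : Q * ((confAct At (Mh (1 : Matrix (Fin 1) (Fin 1) ℍ) 0, Uh 1 1)).1 * qmap K⁻¹)
        = Mh 1 0 := by rw [← Matrix.mul_assoc]; exact hM
    have hU' : Q * ((confAct At (Mh (1 : Matrix (Fin 1) (Fin 1) ℍ) 0, Uh 1 1)).2 * qmap K⁻¹)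
        = Uh 1 1 := by rw [← Matrix.mul_assoc]; exact hU
    have gram : ∀ (X Y PX PY : Matrix (Fin 1 ⊕ Fin 1) (Fin 1) ℍ),
        Q * X = PX → Q * Y = PY → Xᴴ * Y = PXᴴ * PY := by
      intro X Y PX PY hX hY
      calc Xᴴ * Y = Xᴴ * (Qᴴ * Q) * Y := by rw [hQ', Matrix.mul_one]
        _ = (Q * X)ᴴ * (Q * Y) := by
            rw [conjTranspose_mul, ← Matrix.mul_assoc Xᴴ Qᴴ Q, Matrix.mul_assoc (Xᴴ * Qᴴ) Q Y]
        _ = PXᴴ * PY := by rw [hX, hY]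
    set κ : ℝ := K⁻¹ 0 0 with hκdef
    have hκ : κ ≠ 0 := by
      have hdet : IsUnit K.det := (Matrix.isUnit_iff_isUnit_det K).mp hK
      have hone : K⁻¹ * K = 1 := Matrix.nonsing_inv_mul K hdet
      have hent : K⁻¹ 0 0 * K 0 0 = 1 := by
        have := congrFun (congrFun hone 0) 0
        simpa [Matrix.mul_apply, Matrix.one_apply] using this
      intro h
      rw [hκdef] at h
      rw [h, zero_mul] at hent
      exact zero_ne_one hent
    have E1 := congrFun (congrFun (gram _ _ _ _ hM' hM') 0) 0
    rw [gram_entry, mulqmap, mulqmap, v1_inl, v1_inr, aux2, aux2, MhMh] at E1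
    simp only [star_neg, neg_mul, mul_neg, neg_neg] at E1
    rw [star_mul_self, star_mul_self, ← coe_mul, ← coe_mul] at E1
    have f1 := coe_sum_eq_one E1
    have E2 := congrFun (congrFun (gram _ _ _ _ hU' hU') 0) 0
    rw [gram_entry, mulqmap, mulqmap, v2_inl, v2_inr, aux2, aux2, UhUh] at E2
    simp only [star_neg, neg_mul, mul_neg, neg_neg] at E2
    rw [star_mul_self, star_mul_self, ← coe_mul, ← coe_mul] at E2
    have f2 := coe_sum_eq_one E2
    have E3 := congrFun (congrFun (gram _ _ _ _ hU' hM') 0) 0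
    rw [gram_entry, mulqmap, mulqmap, mulqmap, mulqmap, v2_inl, v2_inr, v1_inl, v1_inr, aux2, aux2, UhMh] at E3
    simp only [star_neg, neg_mul, mul_neg] at E3
    have E3' : ((κ^2:ℝ):ℍ) * (star (At 1 0) * At 1 1 + star (At 0 0) * At 0 1) = 0 := by
      rw [mul_add]
      have h := congrArg Neg.neg E3
      rw [neg_add, neg_neg, neg_neg, neg_zero] at h
      exact h
    have hκH : ((κ^2:ℝ):ℍ) ≠ 0 := by
      intro h
      have : (κ^2:ℝ) = 0 := by
        apply coe_injective
        rw [coe_zero]; exact h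
      exact (pow_ne_zero 2 hκ) this
    have g3 : star (At 1 0) * At 1 1 + star (At 0 0) * At 0 1 = 0 := by
      rcases mul_eq_zero.mp E3' with h | h
      · exact absurd h hκH
      · exact h
    have h3 : star (At 0 1) * At 0 0 + star (At 1 1) * At 1 0 = 0 := by
      have := congrArg star g3
      simp only [star_add, StarMul.star_mul, star_star, star_zero] at this
      rw [add_comm (star (At 1 1) * At 1 0)] at this
      exact this
    have hκ2 : (0:ℝ) < κ^2 := by positivity
    have hr : 0 < normSq (At 0 0) + normSq (At 1 0) := by
      nlinarith [normSq_nonneg (a := At 0 0), normSq_nonneg (a := At 1 0)]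
    have h2 : normSq (At 0 1) + normSq (At 1 1) = normSq (At 0 0) + normSq (At 1 0) := by
      have e : κ^2 * (normSq (At 0 1) + normSq (At 1 1))
          = κ^2 * (normSq (At 0 0) + normSq (At 1 0)) := by
        linear_combination f1 - f2
      exact mul_left_cancel₀ (ne_of_gt hκ2) e
    have hrone : normSq (At 0 0) + normSq (At 1 0) = 1 :=
      qrone hr rfl h2 h3 hSL₁ hSL₂
    obtain ⟨k1, k2, k3⟩ := qkey hr rfl h2 h3
    rw [← Matrix.ext_iff]
    intro i j
    fin_cases i <;> fin_cases j <;>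
      simp only [Matrix.mul_apply, Fin.sum_univ_two, Matrix.conjTranspose_apply,
        Matrix.one_apply, Fin.isValue, if_true, if_false, reduceIte, Fin.zero_eta, Fin.mk_one]
    · rw [star_mul_self, star_mul_self, ← coe_add, hrone, coe_one]
    · rw [add_comm (star (At 0 0) * At 0 1), g3, if_neg (show (0:Fin 2) ≠ 1 by decide)]
    · rw [h3, if_neg (show (1:Fin 2) ≠ 0 by decide)]
    · rw [star_mul_self, star_mul_self, ← coe_add]
      rw [show normSq (At 0 1) + normSq (At 1 1) = 1 from by linarith [h2, hrone], coe_one]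
  · intro hUnit
    have u00 := congrFun (congrFun hUnit 0) 0
    have u10 := congrFun (congrFun hUnit 1) 0
    have u11 := congrFun (congrFun hUnit 1) 1
    simp only [Matrix.mul_apply, Fin.sum_univ_two, Matrix.conjTranspose_apply,
      Matrix.one_apply, Fin.isValue, reduceIte] at u00 u10 u11
    rw [if_neg (show ¬(1:Fin 2) = 0 by decide)] at u10
    have n1 : normSq (At 0 0) + normSq (At 1 0) = 1 := by
      rw [star_mul_self, star_mul_self] at u00
      exact coe_sum_eq_one u00
    have n2 : normSq (At 0 1) + normSq (At 1 1) = 1 := by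
      rw [star_mul_self, star_mul_self] at u11
      exact coe_sum_eq_one u11
    obtain ⟨k1, k2, k3⟩ := qkey one_pos n1 n2 u10
    set v1 := (confAct At (Mh (1 : Matrix (Fin 1) (Fin 1) ℍ) 0, Uh 1 1)).1 with hv1
    set v2 := (confAct At (Mh (1 : Matrix (Fin 1) (Fin 1) ℍ) 0, Uh 1 1)).2 with hv2
    have u10' : star (At 0 0) * At 0 1 + star (At 1 0) * At 1 1 = 0 := by
      have := congrArg star u10
      simp only [star_add, StarMul.star_mul, star_star, star_zero] at this
      exact this
    have k3' : At 0 1 * star (At 1 1) + At 0 0 * star (At 1 0) = 0 := by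
      have := congrArg star k3
      simp only [star_add, StarMul.star_mul, star_star, star_zero] at this
      exact this
    have e11 : v1ᴴ * v1 = 1 := by
      rw [← Matrix.ext_iff]
      intro i j
      obtain rfl : i = 0 := Subsingleton.elim i 0
      obtain rfl : j = 0 := Subsingleton.elim j 0
      rw [gram_entry, hv1, v1_inl, v1_inr]
      simp only [star_neg, neg_mul, mul_neg, neg_neg]
      rw [star_mul_self, star_mul_self, ← coe_add]
      rw [show normSq (At 1 1) + normSq (At 0 1) = 1 from by linarith [n2], coe_one]
      simp [Matrix.one_apply]
    have e21 : v2ᴴ * v1 = 0 := by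
      rw [← Matrix.ext_iff]
      intro i j
      obtain rfl : i = 0 := Subsingleton.elim i 0
      obtain rfl : j = 0 := Subsingleton.elim j 0
      rw [gram_entry, hv1, hv2, v2_inl, v2_inr, v1_inl, v1_inr]
      simp only [star_neg, neg_mul, mul_neg, neg_neg]
      rw [← neg_add, show star (At 1 0) * At 1 1 + star (At 0 0) * At 0 1 = 0 from by
        rw [add_comm]; exact u10', neg_zero]
      simp
    have e12 : v1ᴴ * v2 = 0 := by
      rw [← Matrix.ext_iff]
      intro i j
      obtain rfl : i = 0 := Subsingleton.elim i 0
      obtain rfl : j = 0 := Subsingleton.elim j 0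
      rw [gram_entry, hv1, hv2, v2_inl, v2_inr, v1_inl, v1_inr]
      simp only [star_neg, neg_mul, mul_neg, neg_neg]
      rw [← neg_add, show star (At 1 1) * At 1 0 + star (At 0 1) * At 0 0 = 0 from by
        rw [add_comm]; exact u10, neg_zero]
      simp
    have e22 : v2ᴴ * v2 = 1 := by
      rw [← Matrix.ext_iff]
      intro i j
      obtain rfl : i = 0 := Subsingleton.elim i 0
      obtain rfl : j = 0 := Subsingleton.elim j 0
      rw [gram_entry, hv2, v2_inl, v2_inr]
      simp only [star_neg, neg_mul, mul_neg, neg_neg]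
      rw [star_mul_self, star_mul_self, ← coe_add]
      rw [show normSq (At 1 0) + normSq (At 0 0) = 1 from by linarith [n1], coe_one]
      simp [Matrix.one_apply]
    refine ⟨(fromCols v1 v2)ᴴ, 1, ?_, isUnit_one, ?_, ?_⟩
    · show ((fromCols v1 v2)ᴴ)ᴴ * (fromCols v1 v2)ᴴ = 1
      rw [conjTranspose_conjTranspose,
        conjTranspose_fromCols_eq_fromRows_conjTranspose, fromCols_mul_fromRows]
      rw [← Matrix.ext_iff]
      intro i j
      rw [Matrix.add_apply, colmul_entry, colmul_entry]
      rcases i with i | i <;> rcases j with j | j <;>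
        (obtain rfl : i = 0 := Subsingleton.elim i 0) <;>
        (obtain rfl : j = 0 := Subsingleton.elim j 0)
      · rw [hv1, hv2, v1_inl, v2_inl]
        simp only [star_neg, neg_mul, mul_neg, neg_neg]
        rw [self_mul_star, self_mul_star, ← coe_add]
        rw [show normSq (At 1 1) + normSq (At 1 0) = 1 from k1, coe_one]
        simp [Matrix.one_apply]
      · rw [hv1, hv2, v1_inl, v1_inr, v2_inl, v2_inr]
        simp only [star_neg, neg_mul, mul_neg, neg_neg]
        rw [← neg_add, show At 1 1 * star (At 0 1) + At 1 0 * star (At 0 0) = 0 from k3,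
          neg_zero]
        simp [Matrix.one_apply]
      · rw [hv1, hv2, v1_inl, v1_inr, v2_inl, v2_inr]
        simp only [star_neg, neg_mul, mul_neg, neg_neg]
        rw [← neg_add, show At 0 1 * star (At 1 1) + At 0 0 * star (At 1 0) = 0 from k3',
          neg_zero]
        simp [Matrix.one_apply]
      · rw [hv1, hv2, v1_inr, v2_inr]
        simp only [star_neg, neg_mul, mul_neg, neg_neg]
        rw [self_mul_star, self_mul_star, ← coe_add]
        rw [show normSq (At 0 1) + normSq (At 0 0) = 1 from by linarith [k2], coe_one]
        simp [Matrix.one_apply]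
    · show (fromCols v1 v2)ᴴ * v1 * qmap (1:Matrix (Fin 1) (Fin 1) ℝ)⁻¹ = Mh 1 0
      rw [inv_one, qmap_one, Matrix.mul_one,
        conjTranspose_fromCols_eq_fromRows_conjTranspose, fromRows_mul, e11, e21]
      rfl
    · show (fromCols v1 v2)ᴴ * v2 * qmap (1:Matrix (Fin 1) (Fin 1) ℝ)⁻¹ = Uh 1 1
      rw [inv_one, qmap_one, Matrix.mul_one,
        conjTranspose_fromCols_eq_fromRows_conjTranspose, fromRows_mul, e12, e22]
      rfl
end
end

section
/- Let M̂ ∈ M_{n,k}, let a, b ∈ ℍ be unit quaternions, and suppose Q ∈ Sp(n+k) and K ∈ GL(k,ℝ) satisfy (Q,K).(diag(a,b).(M̂,U)) = (M̂,U). Then K is orthogonal (KᵀK = I_k) and there exists q ∈ Sp(n) such that Q is the block diagonal matrix diag(q, a†·K) (with blocks q of size n×n and a†K of size k×k, a†K meaning each entry of K multiplied by the quaternion a†). -/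
open Matrix

noncomputable section

section Aux

lemma qrsmul_zero {I J : Type*} (A : Matrix I J ℍ) : rsmul A 0 = 0 :=
  Matrix.ext fun i j => by simp [rsmul]

lemma q_mul_star_one (a : ℍ) (ha : ‖a‖ = 1) : a * star a = 1 := by
  rw [Quaternion.self_mul_star, Quaternion.normSq_eq_norm_mul_self, ha]
  norm_num

lemma q_star_mul_one (a : ℍ) (ha : ‖a‖ = 1) : star a * a = 1 := by
  rw [Quaternion.star_mul_self, Quaternion.normSq_eq_norm_mul_self, ha]
  norm_num

lemma qmap_inv_mul {k : ℕ} (K : Matrix (Fin k) (Fin k) ℝ) (hK : IsUnit K) :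
    qmap K⁻¹ * qmap K = 1 := by
  have h1 : K⁻¹ * K = 1 := Matrix.nonsing_inv_mul K ((Matrix.isUnit_iff_isUnit_det K).mp hK)
  have h2 : qmap (K⁻¹ * K) = qmap K⁻¹ * qmap K := Matrix.map_mul (f := algebraMap ℝ ℍ)
  rw [← h2, h1]
  simp [qmap, Matrix.map_one]
  exact Matrix.map_one _ (by simp) (by simp)

end Aux

/-- If a gauge transformation `(Q,K)` realizes `diag(a,b)`-equivariance of
`M̂ ∈ M_{n,k}` for unit quaternions `a, b`, then `K` is orthogonal and
`Q = diag(q, a†·K)` for some `q ∈ Sp(n)`. -/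
theorem stmt3 {n k : ℕ} (L : Matrix (Fin n) (Fin k) ℍ) (M : Matrix (Fin k) (Fin k) ℍ)
    (hM : InM L M) (a b : ℍ) (ha : ‖a‖ = 1) (hb : ‖b‖ = 1)
    (Q : Matrix (Fin n ⊕ Fin k) (Fin n ⊕ Fin k) ℍ) (K : Matrix (Fin k) (Fin k) ℝ)
    (hQ : IsSp Q) (hK : IsUnit K)
    (heq1 : gaugeAct Q K (confAct !![a, 0; 0, b] (Mh L M, Uh n k)).1 = Mh L M)
    (heq2 : gaugeAct Q K (confAct !![a, 0; 0, b] (Mh L M, Uh n k)).2 = Uh n k) :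
    Kᵀ * K = 1 ∧ ∃ q : Matrix (Fin n) (Fin n) ℍ, IsSp q ∧
      Q = Matrix.fromBlocks q 0 0 (lsmul (star a) (qmap K)) := by
    classical
  have haa : a * star a = 1 := q_mul_star_one a ha
  have ha0 : a ≠ 0 := by
    intro h; rw [h, zero_mul] at haa; exact one_ne_zero haa.symm
  have hKK : qmap K⁻¹ * qmap K = 1 := qmap_inv_mul K hK
  -- simplify heq2
  have h2 : Q * rsmul (Uh n k) a = Uh n k * qmap K := by
    have h := congrArg (· * qmap K) heq2
    simp only [gaugeAct, confAct] at h
    have e00 : (!![a, 0; 0, b] : Matrix (Fin 2) (Fin 2) ℍ) 0 0 = a := by simp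
    have e10 : (!![a, 0; 0, b] : Matrix (Fin 2) (Fin 2) ℍ) 1 0 = 0 := by simp
    rw [e00, e10, qrsmul_zero, sub_zero] at h
    rw [Matrix.mul_assoc (Q * rsmul (Uh n k) a) (qmap K⁻¹) (qmap K), hKK, Matrix.mul_one] at h
    exact h
  have hUm : Uh n k * qmap K = Matrix.fromRows 0 (qmap K) := by
    rw [Uh, Matrix.fromRows_mul]
    simp
  have hUh : ∀ (i : Fin n ⊕ Fin k) (j : Fin k),
      (Q * rsmul (Uh n k) a) i j = Q i (Sum.inr j) * a := by
    intro i j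
    rw [Matrix.mul_apply, Fintype.sum_sum_type]
    simp [rsmul, Uh, Matrix.one_apply, mul_ite, Finset.sum_ite_eq']
  have hcol : ∀ (i : Fin n ⊕ Fin k) (j : Fin k),
      Q i (Sum.inr j) = Matrix.fromRows (0 : Matrix (Fin n) (Fin k) ℍ) (qmap K) i j * star a := by
    intro i j
    have h := congrFun (congrFun h2 i) j
    rw [hUh, hUm] at h
    calc Q i (Sum.inr j) = Q i (Sum.inr j) * (a * star a) := by rw [haa, mul_one]
      _ = Q i (Sum.inr j) * a * star a := by rw [mul_assoc]
      _ = _ := by rw [h]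
  have hB : ∀ (i : Fin n) (j : Fin k), Q (Sum.inl i) (Sum.inr j) = 0 := by
    intro i j
    rw [hcol]
    simp
  have hD : ∀ (i j : Fin k), Q (Sum.inr i) (Sum.inr j) = (K i j : ℍ) * star a := by
    intro i j
    rw [hcol]
    simp [qmap]
  have horth : ∀ p q, (∑ l, star (Q l p) * Q l q) = if p = q then (1 : ℍ) else 0 := by
    intro p q
    have h := congrFun (congrFun hQ p) q
    rw [Matrix.mul_apply] at h
    simpa [Matrix.conjTranspose_apply, Matrix.one_apply] using h
  -- orthogonality of K
  have hKK1 : Kᵀ * K = 1 := by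
    ext j j'
    have h := horth (Sum.inr j) (Sum.inr j')
    rw [Fintype.sum_sum_type] at h
    simp only [hB, hD, star_zero, zero_mul, Finset.sum_const_zero, zero_add] at h
    have e : ∀ i : Fin k, star ((K i j : ℍ) * star a) * ((K i j' : ℍ) * star a)
        = (K i j : ℍ) * (K i j' : ℍ) := by
      intro i
      rw [StarMul.star_mul, star_star, Quaternion.star_coe, ← Quaternion.coe_commutes,
        mul_assoc, ← mul_assoc a, ← Quaternion.coe_commutes (K i j') a, mul_assoc,
        haa, mul_one]
    rw [Finset.sum_congr rfl (fun i _ => e i)] at h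
    have h2' : ((∑ i, K i j * K i j' : ℝ) : ℍ) = ((if j = j' then (1 : ℝ) else 0 : ℝ) : ℍ) := by
      have hs : ((∑ i, K i j * K i j' : ℝ) : ℍ) = ∑ i, ((K i j : ℍ) * (K i j' : ℍ)) := by
        induction (Finset.univ : Finset (Fin k)) using Finset.induction with
        | empty => simp
        | @insert x s hx ih =>
            rw [Finset.sum_insert hx, Finset.sum_insert hx, Quaternion.coe_add, ih,
              Quaternion.coe_mul]
      rw [hs, h]
      by_cases hjj : j = j' <;> simp [hjj]
    have h3 := Quaternion.coe_injective h2'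
    rw [Matrix.mul_apply, Matrix.one_apply]
    simpa [Matrix.transpose_apply] using h3
  -- lower-left block is zero
  have hqKT : IsUnit (qmap Kᵀ) := by
    have hKT : IsUnit Kᵀ := by
      rw [Matrix.isUnit_iff_isUnit_det] at hK ⊢
      rwa [Matrix.det_transpose]
    exact hKT.map (RingHom.mapMatrix (algebraMap ℝ ℍ))
  have hC : ∀ (i : Fin k) (j : Fin n), Q (Sum.inr i) (Sum.inl j) = 0 := by
    intro i j
    have hz : (qmap Kᵀ).mulVec (fun i => Q (Sum.inr i) (Sum.inl j)) = 0 := by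
      funext j'
      have h := horth (Sum.inr j') (Sum.inl j)
      rw [Fintype.sum_sum_type] at h
      simp only [hB, hD, star_zero, zero_mul, Finset.sum_const_zero, zero_add] at h
      have e : ∀ i : Fin k, star ((K i j' : ℍ) * star a) * Q (Sum.inr i) (Sum.inl j)
          = a * ((K i j' : ℍ) * Q (Sum.inr i) (Sum.inl j)) := by
        intro i
        rw [StarMul.star_mul, star_star, Quaternion.star_coe, mul_assoc]
      rw [Finset.sum_congr rfl (fun i _ => e i), ← Finset.mul_sum] at h
      have hif : (if (Sum.inr j' : Fin n ⊕ Fin k) = Sum.inl j then (1 : ℍ) else 0) = 0 := by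
        simp
      rw [hif] at h
      have h4 : (∑ i, (K i j' : ℍ) * Q (Sum.inr i) (Sum.inl j)) = 0 := by
        rcases mul_eq_zero.mp h with h' | h'
        · exact absurd h' ha0
        · exact h'
      rw [Matrix.mulVec, dotProduct]
      simpa [qmap, Matrix.transpose_apply] using h4
    obtain ⟨u, hu⟩ := hqKT
    have h1 : u.inv * qmap Kᵀ = 1 := by
      rw [← hu]; exact u.inv_val
    have hzero : (1 : Matrix (Fin k) (Fin k) ℍ).mulVec (fun i => Q (Sum.inr i) (Sum.inl j)) = 0 := by
      rw [← h1, ← Matrix.mulVec_mulVec, hz, Matrix.mulVec_zero]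
    simpa [Matrix.one_mulVec] using congrFun hzero i
  refine ⟨hKK1, Matrix.of (fun i j => Q (Sum.inl i) (Sum.inl j)), ?_, ?_⟩
  · show _ = _
    refine Matrix.ext fun i j => ?_
    have h := horth (Sum.inl i) (Sum.inl j)
    rw [Fintype.sum_sum_type] at h
    simp only [hC, star_zero, zero_mul, Finset.sum_const_zero, add_zero] at h
    rw [Matrix.mul_apply, Matrix.one_apply]
    simpa [Matrix.conjTranspose_apply, Matrix.one_apply, Sum.inl.injEq] using h
  · refine Matrix.ext fun i j => ?_
    rcases i with i | i <;> rcases j with j | j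
    · simp [Matrix.fromBlocks_apply₁₁]
    · rw [hB]
      simp
    · rw [hC]
      simp
    · rw [hD]
      simp [lsmul, qmap, Matrix.fromBlocks_apply₂₂, Quaternion.coe_commutes]
end
end

section
/- Let M̂ = [L; M] ∈ M_{n,k}, let a, b ∈ ℍ be unit quaternions, and let K be a k×k real orthogonal matrix such that a†·K M Kᵀ = M·b† and K R = R K. Then q := L·b†·K L† (LL†)⁻¹ satisfies q†q = I_n (so q ∈ Sp(n)), q is the unique element of Sp(n) with q L Kᵀ = L·b†, and (diag(q, a†·K), K).(diag(a,b).(M̂,U)) = (M̂,U); in particular M̂ is diag(a,b)-equivariant. -/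
open Matrix

noncomputable section

section Helpers

variable {I J L' : Type*}

@[simp] lemma rsmul_apply (A : Matrix I J ℍ) (x : ℍ) (i j) : rsmul A x i j = A i j * x := rfl
@[simp] lemma lsmul_apply (x : ℍ) (A : Matrix I J ℍ) (i j) : lsmul x A i j = x * A i j := rfl
@[simp] lemma qmap_apply (K : Matrix I J ℝ) (i j) : qmap K i j = (K i j : ℍ) := rfl

lemma mul_rsmul [Fintype J] (A : Matrix I J ℍ) (B : Matrix J L' ℍ) (x : ℍ) :
    A * rsmul B x = rsmul (A * B) x := by
  refine Matrix.ext fun i j => ?_; simp [Matrix.mul_apply, Finset.sum_mul, mul_assoc]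

lemma lsmul_mul [Fintype J] (x : ℍ) (A : Matrix I J ℍ) (B : Matrix J L' ℍ) :
    lsmul x A * B = lsmul x (A * B) := by
  refine Matrix.ext fun i j => ?_; simp [Matrix.mul_apply, Finset.mul_sum, mul_assoc]

lemma rsmul_mul_qmap [Fintype J] (A : Matrix I J ℍ) (x : ℍ) (K : Matrix J L' ℝ) :
    rsmul A x * qmap K = rsmul (A * qmap K) x := by
  refine Matrix.ext fun i j => ?_
  simp only [Matrix.mul_apply, rsmul_apply, qmap_apply, Finset.sum_mul]
  refine Finset.sum_congr rfl fun l _ => ?_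
  rw [mul_assoc, mul_assoc, Quaternion.coe_commutes]

lemma rsmul_conjTranspose (A : Matrix I J ℍ) (x : ℍ) :
    (rsmul A x)ᴴ = lsmul (star x) Aᴴ := by
  refine Matrix.ext fun i j => ?_; simp [conjTranspose_apply]

lemma lsmul_conjTranspose (x : ℍ) (A : Matrix I J ℍ) :
    (lsmul x A)ᴴ = rsmul Aᴴ (star x) := by
  refine Matrix.ext fun i j => ?_; simp [conjTranspose_apply]

lemma rsmul_rsmul (A : Matrix I J ℍ) (x y : ℍ) : rsmul (rsmul A x) y = rsmul A (x * y) := by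
  refine Matrix.ext fun i j => ?_; simp [mul_assoc]

lemma lsmul_lsmul (x y : ℍ) (A : Matrix I J ℍ) : lsmul x (lsmul y A) = lsmul (x * y) A := by
  refine Matrix.ext fun i j => ?_; simp [mul_assoc]

@[simp] lemma rsmul_one (A : Matrix I J ℍ) : rsmul A 1 = A := by
  refine Matrix.ext fun i j => ?_; simp

@[simp] lemma lsmul_one (A : Matrix I J ℍ) : lsmul 1 A = A := by
  refine Matrix.ext fun i j => ?_; simp

@[simp] lemma rsmul_zero' (A : Matrix I J ℍ) : rsmul A 0 = 0 := by
  refine Matrix.ext fun i j => ?_; simp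

lemma rsmul_mul_lsmul [Fintype J] (A : Matrix I J ℍ) (x y : ℍ) (B : Matrix J L' ℍ) :
    rsmul A x * lsmul y B = A * lsmul (x * y) B := by
  refine Matrix.ext fun i j => ?_
  simp only [Matrix.mul_apply, rsmul_apply, lsmul_apply]
  refine Finset.sum_congr rfl fun l _ => ?_
  rw [mul_assoc, ← mul_assoc x, ← mul_assoc]

lemma lsmul_rsmul (x : ℍ) (A : Matrix I J ℍ) (y : ℍ) :
    lsmul x (rsmul A y) = rsmul (lsmul x A) y := by
  refine Matrix.ext fun i j => ?_; simp [mul_assoc]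

lemma lsmul_sub (x : ℍ) (A B : Matrix I J ℍ) : lsmul x (A - B) = lsmul x A - lsmul x B := by
  refine Matrix.ext fun i j => ?_; simp [mul_sub]

lemma rsmul_sub (A B : Matrix I J ℍ) (x : ℍ) : rsmul (A - B) x = rsmul A x - rsmul B x := by
  refine Matrix.ext fun i j => ?_; simp [sub_mul]

lemma qmap_mul [Fintype J] (A : Matrix I J ℝ) (B : Matrix J L' ℝ) :
    qmap (A * B) = qmap A * qmap B := by
  refine Matrix.ext fun i j => ?_
  simp only [qmap_apply, Matrix.mul_apply, ← Quaternion.algebraMap_def, map_sum, _root_.map_mul]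

@[simp] lemma qmap_one [Fintype I] [DecidableEq I] : qmap (1 : Matrix I I ℝ) = 1 := by
  refine Matrix.ext fun i j => ?_; by_cases h : i = j <;> simp [Matrix.one_apply, h]

lemma qmap_transpose (K : Matrix I J ℝ) : qmap Kᵀ = (qmap K)ᴴ := by
  refine Matrix.ext fun i j => ?_; simp [conjTranspose_apply, Quaternion.star_coe]

lemma conjTranspose_mul_self_eq_zero {I J : Type*} [Fintype I] (A : Matrix I J ℍ)
    (h : Aᴴ * A = 0) : A = 0 := by
  refine Matrix.ext fun i j => ?_
  have hj := congrFun (congrFun h j) j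
  simp only [Matrix.mul_apply, conjTranspose_apply, Matrix.zero_apply] at hj
  have hj' : ∑ l, ((Quaternion.normSq (A l j) : ℝ) : ℍ) = 0 := by
    simpa only [Quaternion.star_mul_self] using hj
  have h0 : ∑ l, Quaternion.normSq (A l j) = 0 := by
    apply Quaternion.algebraMap_injective
    rw [map_sum, map_zero]
    simpa [Quaternion.algebraMap_def] using hj'
  have := (Finset.sum_eq_zero_iff_of_nonneg (fun l _ => Quaternion.normSq_nonneg)).1 h0 i
    (Finset.mem_univ i)
  simpa [Quaternion.normSq_eq_zero] using this

lemma isUnit_of_posdef {I : Type*} [Fintype I] [DecidableEq I] (P : Matrix I I ℍ)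
    (hP : Pᴴ = P) (hpd : IsPosDefQ P) : IsUnit P := by
  have hker : ∀ v : I → ℍ, P *ᵥ v = 0 → v = 0 := by
    intro v hv
    by_contra hv0
    obtain ⟨r, hr, hrv⟩ := hpd v hv0
    rw [hv, dotProduct_zero] at hrv
    have : r = 0 := by exact_mod_cast Quaternion.algebraMap_injective (by simpa using hrv.symm)
    exact hr.ne' this
  have hmv : Function.Injective P.mulVec := by
    intro u v huv
    have : P *ᵥ (u - v) = 0 := by rw [Matrix.mulVec_sub, huv, sub_self]
    simpa [sub_eq_zero] using hker _ this
  have hvm : Function.Injective P.vecMul := by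
    intro u v huv
    have huv' : u ᵥ* P = v ᵥ* P := huv
    have h1 : star (P *ᵥ star u) = star (P *ᵥ star v) := by
      rw [Matrix.star_mulVec, Matrix.star_mulVec, hP, star_star, star_star, huv']
    have h2 := hmv (star_injective h1)
    simpa using congrArg star h2
  have hsurj : Function.Surjective P.vecMulLinear :=
    LinearMap.surjective_of_injective (f := P.vecMulLinear) hvm
  obtain ⟨B, hB⟩ := Matrix.vecMul_surjective_iff_exists_left_inverse.1 hsurj
  have hB2 : P * Bᴴ = 1 := by
    have := congrArg conjTranspose hB
    rwa [conjTranspose_mul, hP, conjTranspose_one] at this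
  have hBB : B = Bᴴ := by
    calc B = B * (P * Bᴴ) := by rw [hB2, mul_one]
    _ = (B * P) * Bᴴ := by rw [mul_assoc]
    _ = Bᴴ := by rw [hB, one_mul]
  exact ⟨⟨P, Bᴴ, hB2, by rw [← hBB, hB]⟩, rfl⟩

end Helpers

/-- If `K` is real orthogonal with `a†·K M Kᵀ = M·b†` and `K R = R K`, then
`q := L·b†·K L† (LL†)⁻¹ ∈ Sp(n)` is the unique element of `Sp(n)` with `q L Kᵀ = L·b†`, and
`(diag(q, a†·K), K)` realizes the `diag(a,b)`-equivariance of `M̂`. -/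
theorem stmt4 {n k : ℕ} (L : Matrix (Fin n) (Fin k) ℍ) (M : Matrix (Fin k) (Fin k) ℍ)
    (hM : InM L M) (a b : ℍ) (ha : ‖a‖ = 1) (hb : ‖b‖ = 1)
    (K : Matrix (Fin k) (Fin k) ℝ) (hK : Kᵀ * K = 1)
    (hKM : lsmul (star a) (qmap K * M * qmap Kᵀ) = rsmul M (star b))
    (hKR : qmap K * (Lᴴ * L + Mᴴ * M) = (Lᴴ * L + Mᴴ * M) * qmap K) :
    (rsmul L (star b) * qmap K * Lᴴ * Ring.inverse (L * Lᴴ))ᴴ *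
        (rsmul L (star b) * qmap K * Lᴴ * Ring.inverse (L * Lᴴ)) = 1 ∧
    rsmul L (star b) * qmap K * Lᴴ * Ring.inverse (L * Lᴴ) * L * qmap Kᵀ
        = rsmul L (star b) ∧
    (∀ q' : Matrix (Fin n) (Fin n) ℍ, q'ᴴ * q' = 1 →
      q' * L * qmap Kᵀ = rsmul L (star b) →
      q' = rsmul L (star b) * qmap K * Lᴴ * Ring.inverse (L * Lᴴ)) ∧
    gaugeAct (Matrix.fromBlocks (rsmul L (star b) * qmap K * Lᴴ * Ring.inverse (L * Lᴴ))
        0 0 (lsmul (star a) (qmap K))) K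
        (confAct !![a, 0; 0, b] (Mh L M, Uh n k)).1 = Mh L M ∧
    gaugeAct (Matrix.fromBlocks (rsmul L (star b) * qmap K * Lᴴ * Ring.inverse (L * Lᴴ))
        0 0 (lsmul (star a) (qmap K))) K
        (confAct !![a, 0; 0, b] (Mh L M, Uh n k)).2 = Uh n k ∧
    Equivariant L M !![a, 0; 0, b] := by
  obtain ⟨hMsymm, hLpd, hRreal, hRunit, hDelta⟩ := hM
  have hbb : star b * b = 1 := by
    rw [Quaternion.star_mul_self, Quaternion.normSq_eq_norm_mul_self, hb]; norm_num
  have hbb' : b * star b = 1 := by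
    rw [Quaternion.self_mul_star, Quaternion.normSq_eq_norm_mul_self, hb]; norm_num
  have haa : a * star a = 1 := by
    rw [Quaternion.self_mul_star, Quaternion.normSq_eq_norm_mul_self, ha]; norm_num
  have haa' : star a * a = 1 := by
    rw [Quaternion.star_mul_self, Quaternion.normSq_eq_norm_mul_self, ha]; norm_num
  have hKK : K * Kᵀ = 1 := mul_eq_one_comm.mp hK
  have hqKt : (qmap Kᵀ)ᴴ = qmap K := by rw [← qmap_transpose, transpose_transpose]
  have hqK : (qmap K)ᴴ = qmap Kᵀ := (qmap_transpose K).symm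
  have hKK1 : qmap K * qmap Kᵀ = 1 := by rw [← qmap_mul, hKK, qmap_one]
  have hKK2 : qmap Kᵀ * qmap K = 1 := by rw [← qmap_mul, hK, qmap_one]
  set R' := Lᴴ * L + Mᴴ * M with hR'
  set P := L * Lᴴ with hPdef
  set X := L * qmap Kᵀ with hXdef
  set Y := rsmul L (star b) with hYdef
  have hPherm : Pᴴ = P := by rw [hPdef, conjTranspose_mul, conjTranspose_conjTranspose]
  have hPunit : IsUnit P := isUnit_of_posdef P hPherm hLpd
  have hPP1 : P * Ring.inverse P = 1 := Ring.mul_inverse_cancel P hPunit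
  have hPP2 : Ring.inverse P * P = 1 := Ring.inverse_mul_cancel P hPunit
  have hPinvH : (Ring.inverse P)ᴴ = Ring.inverse P := by
    rw [← Matrix.star_eq_conjTranspose, ← Ring.inverse_star, Matrix.star_eq_conjTranspose, hPherm]
  have hXH : Xᴴ = qmap K * Lᴴ := by rw [hXdef, conjTranspose_mul, hqKt]
  have hYH : Yᴴ = lsmul b Lᴴ := by rw [hYdef, rsmul_conjTranspose, star_star]
  have hXXH : X * Xᴴ = P := by
    rw [hXH, hXdef, hPdef, Matrix.mul_assoc, ← Matrix.mul_assoc (qmap Kᵀ), hKK2, Matrix.one_mul]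
  have hKMKt : qmap K * M * qmap Kᵀ = lsmul a (rsmul M (star b)) := by
    have h := congrArg (lsmul a) hKM
    rwa [lsmul_lsmul, haa, lsmul_one] at h
  have hKMH : qmap K * Mᴴ * qmap Kᵀ = lsmul b (rsmul Mᴴ (star a)) := by
    have h := congrArg conjTranspose hKMKt
    rw [conjTranspose_mul, conjTranspose_mul, hqKt, hqK] at h
    rw [lsmul_conjTranspose, rsmul_conjTranspose, star_star, ← lsmul_rsmul] at h
    rw [← Matrix.mul_assoc] at h
    exact h
  have hKMM : qmap K * (Mᴴ * M) * qmap Kᵀ = lsmul b (rsmul (Mᴴ * M) (star b)) := by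
    have hmid : qmap K * (Mᴴ * M) * qmap Kᵀ
        = (qmap K * Mᴴ * qmap Kᵀ) * (qmap K * M * qmap Kᵀ) := by
      simp only [Matrix.mul_assoc]
      rw [← Matrix.mul_assoc (qmap Kᵀ), hKK2, Matrix.one_mul]
    rw [hmid, hKMH, hKMKt, lsmul_mul, rsmul_mul_lsmul, haa', lsmul_one, mul_rsmul]
  have hRb : lsmul b (rsmul R' (star b)) = R' := by
    refine Matrix.ext fun i j => ?_
    rw [lsmul_apply, rsmul_apply, hRreal i j, Quaternion.coe_commutes, ← mul_assoc, hbb',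
      one_mul]
  have hLL : Lᴴ * L = R' - Mᴴ * M := by rw [hR', add_sub_cancel_right]
  have hKLL : qmap K * (Lᴴ * L) * qmap Kᵀ = lsmul b (rsmul (Lᴴ * L) (star b)) := by
    rw [hLL, mul_sub, sub_mul, hKR, Matrix.mul_assoc R', hKK1, mul_one, hKMM, rsmul_sub, lsmul_sub,
      hRb]
  have hstar : Xᴴ * X = Yᴴ * Y := by
    rw [hXH, hXdef, hYH, hYdef, lsmul_mul, mul_rsmul, ← hKLL]
    simp only [Matrix.mul_assoc]
  set q := Y * qmap K * Lᴴ * Ring.inverse P with hqdef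
  have hq2 : q = Y * Xᴴ * Ring.inverse P := by rw [hqdef, hXH, Matrix.mul_assoc Y]
  have hqH : qᴴ = Ring.inverse P * (X * Yᴴ) := by
    rw [hq2, conjTranspose_mul, conjTranspose_mul, hPinvH, conjTranspose_conjTranspose]
  have hqHq : qᴴ * q = 1 := by
    calc qᴴ * q = Ring.inverse P * (X * (Yᴴ * Y) * Xᴴ) * Ring.inverse P := by
          rw [hqH, hq2]; simp only [Matrix.mul_assoc]
      _ = Ring.inverse P * (X * (Xᴴ * X) * Xᴴ) * Ring.inverse P := by rw [hstar]
      _ = Ring.inverse P * ((X * Xᴴ) * (X * Xᴴ)) * Ring.inverse P := by simp only [Matrix.mul_assoc]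
      _ = 1 := by rw [hXXH, ← Matrix.mul_assoc, hPP2, one_mul, hPP1]
  have hYq : Yᴴ * q = Xᴴ := by
    calc Yᴴ * q = (Yᴴ * Y) * Xᴴ * Ring.inverse P := by rw [hq2]; simp only [Matrix.mul_assoc]
      _ = (Xᴴ * X) * Xᴴ * Ring.inverse P := by rw [hstar]
      _ = Xᴴ * (X * Xᴴ) * Ring.inverse P := by simp only [Matrix.mul_assoc]
      _ = Xᴴ := by rw [hXXH, Matrix.mul_assoc, hPP1, Matrix.mul_one]
  have hqX : q * X = Y := by
    have hqY : qᴴ * Y = X := by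
      have h := congrArg conjTranspose hYq
      rwa [conjTranspose_mul, conjTranspose_conjTranspose, conjTranspose_conjTranspose] at h
    have hZ : (q * X - Y)ᴴ * (q * X - Y) = 0 := by
      rw [conjTranspose_sub, Matrix.sub_mul, Matrix.mul_sub, Matrix.mul_sub, conjTranspose_mul]
      have h1 : Xᴴ * qᴴ * (q * X) = Xᴴ * X := by
        calc Xᴴ * qᴴ * (q * X) = Xᴴ * (qᴴ * q) * X := by simp only [Matrix.mul_assoc]
          _ = Xᴴ * X := by rw [hqHq, Matrix.mul_one]
      have h2 : Xᴴ * qᴴ * Y = Xᴴ * X := by rw [Matrix.mul_assoc, hqY]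
      have h3 : Yᴴ * (q * X) = Xᴴ * X := by rw [← Matrix.mul_assoc, hYq]
      rw [h1, h2, h3, hstar]
      simp
    have h0 := conjTranspose_mul_self_eq_zero _ hZ
    rwa [sub_eq_zero] at h0
  have hqLKt : q * L * qmap Kᵀ = Y := by rw [Matrix.mul_assoc, ← hXdef]; exact hqX
  have hKinv : K⁻¹ = Kᵀ := Matrix.inv_eq_left_inv hK
  have hconf : confAct !![a, 0; 0, b] (Mh L M, Uh n k)
      = (rsmul (Mh L M) b, rsmul (Uh n k) a) := by
    simp [confAct]
  have hrsMh : rsmul (Mh L M) b = Matrix.fromRows (rsmul L b) (rsmul M b) := by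
    refine Matrix.ext fun i j => ?_; cases i <;> rfl
  have hrsU : rsmul (Uh n k) a
      = Matrix.fromRows (0 : Matrix (Fin n) (Fin k) ℍ) (rsmul 1 a) := by
    refine Matrix.ext fun i j => ?_
    cases i <;> simp [Uh]
  have htop : q * rsmul L b * qmap Kᵀ = L := by
    rw [mul_rsmul, rsmul_mul_qmap, hqLKt, hYdef, rsmul_rsmul, hbb, rsmul_one]
  have hbot : lsmul (star a) (qmap K) * rsmul M b * qmap Kᵀ = M := by
    rw [lsmul_mul, lsmul_mul, mul_rsmul, rsmul_mul_qmap, hKMKt, ← lsmul_rsmul, rsmul_rsmul,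
      hbb, rsmul_one, lsmul_lsmul, haa', lsmul_one]
  have hDK : lsmul (star a) (qmap K) * rsmul (1 : Matrix (Fin k) (Fin k) ℍ) a = qmap K := by
    rw [lsmul_mul, mul_rsmul, mul_one]
    refine Matrix.ext fun i j => ?_
    rw [lsmul_apply, rsmul_apply, qmap_apply, Quaternion.coe_commutes, ← mul_assoc, haa',
      one_mul]
  have hpart4 : gaugeAct
      (Matrix.fromBlocks q 0 0 (lsmul (star a) (qmap K))) K
      (confAct !![a, 0; 0, b] (Mh L M, Uh n k)).1 = Mh L M := by
    rw [hconf]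
    show Matrix.fromBlocks q 0 0 (lsmul (star a) (qmap K)) * rsmul (Mh L M) b * qmap K⁻¹
        = Mh L M
    rw [hKinv, hrsMh]
    show _ * Matrix.fromRows (rsmul L b) (rsmul M b) * qmap Kᵀ = Matrix.fromRows L M
    rw [Matrix.fromBlocks_mul_fromRows, Matrix.fromRows_mul]
    simp only [Matrix.zero_mul, Matrix.mul_zero, add_zero, zero_add]
    rw [htop, hbot]
  have hpart5 : gaugeAct
      (Matrix.fromBlocks q 0 0 (lsmul (star a) (qmap K))) K
      (confAct !![a, 0; 0, b] (Mh L M, Uh n k)).2 = Uh n k := by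
    rw [hconf]
    show Matrix.fromBlocks q 0 0 (lsmul (star a) (qmap K)) * rsmul (Uh n k) a * qmap K⁻¹
        = Uh n k
    rw [hKinv, hrsU]
    show _ * _ * qmap Kᵀ = Matrix.fromRows 0 1
    rw [Matrix.fromBlocks_mul_fromRows, Matrix.fromRows_mul]
    simp only [Matrix.zero_mul, Matrix.mul_zero, add_zero, zero_add]
    rw [hDK, hKK1]
  have hDD : (lsmul (star a) (qmap K))ᴴ * lsmul (star a) (qmap K) = 1 := by
    rw [lsmul_conjTranspose, star_star, rsmul_mul_lsmul, haa, lsmul_one, hqK, hKK2]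
  have hSp : IsSp (Matrix.fromBlocks q 0 0 (lsmul (star a) (qmap K))) := by
    show _ᴴ * _ = 1
    rw [Matrix.fromBlocks_conjTranspose, Matrix.fromBlocks_multiply]
    simp only [Matrix.conjTranspose_zero, Matrix.mul_zero, Matrix.zero_mul, add_zero, zero_add]
    rw [hqHq, hDD, Matrix.fromBlocks_one]
  refine ⟨hqHq, ?_, ?_, hpart4, hpart5,
    ⟨_, K, hSp, (Matrix.isUnit_iff_isUnit_det K).mpr (Matrix.isUnit_det_of_left_inverse hK), hpart4, hpart5⟩⟩
  · exact hqLKt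
  · intro q' hq'u hq'eq
    have hq'X : q' * X = Y := by rw [hXdef, ← Matrix.mul_assoc]; exact hq'eq
    calc q' = q' * (P * Ring.inverse P) := by rw [hPP1, mul_one]
      _ = (q' * X) * Xᴴ * Ring.inverse P := by rw [← hXXH]; simp only [Matrix.mul_assoc]
      _ = Y * Xᴴ * Ring.inverse P := by rw [hq'X]
      _ = q := hq2.symm
end
end

section
/- Let M̂ = [L; M] ∈ M_{n,k}, let a, b ∈ ℍ be unit quaternions, and suppose Q ∈ Sp(n+k) and K ∈ GL(k,ℝ) satisfy (Q,K).(diag(a,b).(M̂,U)) = (M̂,U). Then K is orthogonal (KᵀK = I_k), RK = KR, and Q = diag(L·b†·K L† (LL†)⁻¹, a†·K). -/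
open Matrix

noncomputable section

namespace Stmt5Aux

open Matrix

variable {I J P : Type*}

lemma qmap_eq (K : Matrix I J ℝ) : qmap K = K.map (algebraMap ℝ ℍ) := by
  simp [qmap, QuaternionAlgebra.coe_algebraMap]

lemma qmap_mul [Fintype J] (A : Matrix I J ℝ) (B : Matrix J P ℝ) :
    qmap (A * B) = qmap A * qmap B := by
  simp only [qmap_eq]
  exact Matrix.map_mul

lemma qmap_one [DecidableEq I] : qmap (1 : Matrix I I ℝ) = 1 := by
  rw [qmap_eq]
  exact Matrix.map_one _ (map_zero _) (map_one _)

lemma qmap_inj {A B : Matrix I J ℝ} (h : qmap A = qmap B) : A = B := by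
  refine Matrix.ext fun i j => ?_
  have := congrFun (congrFun h i) j
  simpa [qmap, Quaternion.coe_inj] using this

lemma qmap_conjTranspose (K : Matrix I J ℝ) : (qmap K)ᴴ = qmap Kᵀ := by
  refine Matrix.ext fun i j => ?_
  simp [qmap, Quaternion.star_coe]

@[simp] lemma rsmul_zero_right (A : Matrix I J ℍ) : rsmul A (0 : ℍ) = 0 := by
  refine Matrix.ext fun i j => ?_
  simp [rsmul]

@[simp] lemma rsmul_one_right (A : Matrix I J ℍ) : rsmul A (1 : ℍ) = A := by
  refine Matrix.ext fun i j => ?_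
  simp [rsmul]

lemma mul_rsmul [Fintype J] (A : Matrix I J ℍ) (B : Matrix J P ℍ) (x : ℍ) :
    A * rsmul B x = rsmul (A * B) x := by
  refine Matrix.ext fun i j => ?_
  simp [rsmul, Matrix.mul_apply, Finset.sum_mul, mul_assoc]

lemma rsmul_rsmul (A : Matrix I J ℍ) (x y : ℍ) :
    rsmul (rsmul A x) y = rsmul A (x * y) := by
  refine Matrix.ext fun i j => ?_
  simp [rsmul, mul_assoc]

lemma rsmul_mul_qmap [Fintype J] (A : Matrix I J ℍ) (x : ℍ) (K : Matrix J P ℝ) :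
    rsmul A x * qmap K = rsmul (A * qmap K) x := by
  refine Matrix.ext fun i j => ?_
  simp only [rsmul, qmap, Matrix.mul_apply, Matrix.map_apply, Finset.sum_mul]
  refine Finset.sum_congr rfl fun l _ => ?_
  rw [mul_assoc, mul_assoc, Quaternion.coe_commutes]

lemma lsmul_mul_rsmul [Fintype J] (c : ℍ) (X : Matrix I J ℍ) (Y : Matrix J P ℍ) (d : ℍ) :
    lsmul c X * rsmul Y d = lsmul c (rsmul (X * Y) d) := by
  refine Matrix.ext fun i j => ?_
  simp only [lsmul, rsmul, Matrix.mul_apply, Matrix.map_apply, Finset.mul_sum, Finset.sum_mul]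
  refine Finset.sum_congr rfl fun l _ => ?_
  simp [mul_assoc]

lemma rsmul_mul_lsmul [Fintype J] (X : Matrix I J ℍ) (c d : ℍ) (Y : Matrix J P ℍ)
    (h : c * d = 1) : rsmul X c * lsmul d Y = X * Y := by
  refine Matrix.ext fun i j => ?_
  simp only [lsmul, rsmul, Matrix.mul_apply, Matrix.map_apply]
  refine Finset.sum_congr rfl fun l _ => ?_
  rw [mul_assoc, ← mul_assoc c d, h, one_mul]

lemma rsmul_conjTranspose (A : Matrix I J ℍ) (x : ℍ) :
    (rsmul A x)ᴴ = lsmul (star x) Aᴴ := by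
  refine Matrix.ext fun i j => ?_
  simp [rsmul, lsmul, Matrix.conjTranspose_apply]

lemma lsmul_conjTranspose (A : Matrix I J ℍ) (x : ℍ) :
    (lsmul x A)ᴴ = rsmul Aᴴ (star x) := by
  refine Matrix.ext fun i j => ?_
  simp [rsmul, lsmul, Matrix.conjTranspose_apply]

lemma rsmul_fromRows {I₁ I₂ : Type*} (A : Matrix I₁ J ℍ) (B : Matrix I₂ J ℍ) (x : ℍ) :
    rsmul (Matrix.fromRows A B) x = Matrix.fromRows (rsmul A x) (rsmul B x) := by
  refine Matrix.ext fun i j => ?_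
  cases i <;> simp [rsmul, Matrix.fromRows_apply_inl, Matrix.fromRows_apply_inr]

lemma one_rsmul_mul [Fintype I] [DecidableEq I] (c : ℍ) (X : Matrix I P ℍ) :
    rsmul (1 : Matrix I I ℍ) c * X = lsmul c X := by
  refine Matrix.ext fun i j => ?_
  simp [rsmul, lsmul, Matrix.mul_apply, Matrix.one_apply, ite_mul, Finset.sum_ite_eq]

lemma lsmul_rsmul_one [Fintype I] [DecidableEq I] (c d : ℍ) (h : c * d = 1) :
    lsmul c (rsmul (1 : Matrix I I ℍ) d) = 1 := by
  refine Matrix.ext fun i j => ?_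
  by_cases hij : i = j <;> simp [lsmul, rsmul, Matrix.one_apply, hij, h]

lemma lsmul_add (c : ℍ) (A B : Matrix I J ℍ) : lsmul c (A + B) = lsmul c A + lsmul c B := by
  refine Matrix.ext fun i j => ?_
  simp [lsmul, mul_add]

lemma rsmul_add (A B : Matrix I J ℍ) (c : ℍ) : rsmul (A + B) c = rsmul A c + rsmul B c := by
  refine Matrix.ext fun i j => ?_
  simp [rsmul, add_mul]

lemma unit_self_mul_star {a : ℍ} (ha : ‖a‖ = 1) : a * star a = 1 := by
  rw [Quaternion.self_mul_star]
  have : Quaternion.normSq a = 1 := by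
    rw [Quaternion.normSq_eq_norm_mul_self, ha, one_mul]
  rw [this]; norm_num

lemma unit_star_mul_self {a : ℍ} (ha : ‖a‖ = 1) : star a * a = 1 := by
  rw [Quaternion.star_mul_self]
  have : Quaternion.normSq a = 1 := by
    rw [Quaternion.normSq_eq_norm_mul_self, ha, one_mul]
  rw [this]; norm_num

lemma real_conj_eq {m p : ℕ} {R : Matrix (Fin m) (Fin p) ℍ} (hR : IsRealMatrix R) {b : ℍ}
    (hb : b * star b = 1) : lsmul b (rsmul R (star b)) = R := by
  refine Matrix.ext fun i j => ?_
  simp only [lsmul, rsmul, Matrix.map_apply]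
  rw [hR i j, Quaternion.coe_commutes, ← mul_assoc, hb, one_mul]

lemma isUnit_of_posdef {m : ℕ} (A : Matrix (Fin m) (Fin m) ℍ) (hA : Aᴴ = A)
    (h : IsPosDefQ A) : IsUnit A := by
  have key : ∀ w : Fin m → ℍ, w ᵥ* A = 0 → w = 0 := by
    intro w hw
    by_contra hne
    have hvne : star w ≠ 0 := fun hs => hne (by simpa using congrArg star hs)
    have hv : A.mulVec (star w) = 0 := by
      have h1 : star (A.mulVec (star w)) = 0 := by
        rw [Matrix.star_mulVec, star_star, hA, hw]
      have := congrArg star h1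
      simpa using this
    obtain ⟨r, hr, hre⟩ := h (star w) hvne
    rw [hv] at hre
    simp only [dotProduct_zero] at hre
    have : r = 0 := by
      have := congrArg QuaternionAlgebra.re hre
      simpa [Quaternion.re_zero] using this.symm
    exact absurd this (ne_of_gt hr)
  have hinj : Function.Injective A.vecMulLinear := by
    intro x y hxy
    have h0 : (x - y) ᵥ* A = 0 := by
      rw [Matrix.sub_vecMul]
      simp only [Matrix.vecMulLinear_apply] at hxy
      rw [hxy, sub_self]
    have := key _ h0
    exact sub_eq_zero.mp this
  have hsurj : Function.Surjective A.vecMulLinear :=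
    LinearMap.injective_iff_surjective.mp hinj
  choose g hg using hsurj
  set B : Matrix (Fin m) (Fin m) ℍ := Matrix.of (fun i => g (Pi.single i 1)) with hBdef
  have hBA : B * A = 1 := by
    refine Matrix.ext fun i j => ?_
    rw [Matrix.mul_apply_eq_vecMul]
    have := congrFun (hg (Pi.single i 1)) j
    simp only [Matrix.vecMulLinear_apply] at this
    rw [show B i = g (Pi.single i 1) from rfl, this]
    rw [Matrix.one_apply, Pi.single_apply]
    simp [eq_comm]
  have hAB' : A * Bᴴ = 1 := by
    have := congrArg Matrix.conjTranspose hBA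
    rwa [Matrix.conjTranspose_mul, hA, Matrix.conjTranspose_one] at this
  have hBB : B = Bᴴ := by
    calc B = B * (A * Bᴴ) := by rw [hAB', Matrix.mul_one]
    _ = (B * A) * Bᴴ := by rw [Matrix.mul_assoc]
    _ = Bᴴ := by rw [hBA, Matrix.one_mul]
  exact ⟨⟨A, B, by rw [hBB]; exact hAB', hBA⟩, rfl⟩


lemma conj_eq' {m p : ℕ} (X : Matrix (Fin m) (Fin p) ℍ) (c : ℍ) (K : Matrix (Fin p) (Fin p) ℝ) :
    (rsmul X c * qmap K)ᴴ * (rsmul X c * qmap K)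
      = qmap Kᵀ * lsmul (star c) (rsmul (Xᴴ * X) c) * qmap K := by
  rw [Matrix.conjTranspose_mul, rsmul_conjTranspose, qmap_conjTranspose,
    Matrix.mul_assoc (qmap Kᵀ), ← Matrix.mul_assoc (lsmul (star c) Xᴴ),
    lsmul_mul_rsmul, ← Matrix.mul_assoc]

end Stmt5Aux

/-- If `(Q,K)` realizes `diag(a,b)`-equivariance of `M̂ ∈ M_{n,k}` for unit
quaternions `a, b`, then `K` is orthogonal, `K` commutes with `R`, and
`Q = diag(L·b†·K L† (LL†)⁻¹, a†·K)`. -/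
theorem stmt5 {n k : ℕ} (L : Matrix (Fin n) (Fin k) ℍ) (M : Matrix (Fin k) (Fin k) ℍ)
    (hM : InM L M) (a b : ℍ) (ha : ‖a‖ = 1) (hb : ‖b‖ = 1)
    (Q : Matrix (Fin n ⊕ Fin k) (Fin n ⊕ Fin k) ℍ) (K : Matrix (Fin k) (Fin k) ℝ)
    (hQ : IsSp Q) (hK : IsUnit K)
    (heq1 : gaugeAct Q K (confAct !![a, 0; 0, b] (Mh L M, Uh n k)).1 = Mh L M)
    (heq2 : gaugeAct Q K (confAct !![a, 0; 0, b] (Mh L M, Uh n k)).2 = Uh n k) :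
    Kᵀ * K = 1 ∧
    (Lᴴ * L + Mᴴ * M) * qmap K = qmap K * (Lᴴ * L + Mᴴ * M) ∧
    Q = Matrix.fromBlocks (rsmul L (star b) * qmap K * Lᴴ * Ring.inverse (L * Lᴴ)) 0 0
        (lsmul (star a) (qmap K)) := by
  classical
  obtain ⟨hMsym, hLpos, hRreal, hRunit, hDelta⟩ := hM
  have hna : a * star a = 1 := Stmt5Aux.unit_self_mul_star ha
  have hna' : star a * a = 1 := Stmt5Aux.unit_star_mul_self ha
  have hnb : b * star b = 1 := Stmt5Aux.unit_self_mul_star hb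
  have hKdet : IsUnit K.det := (Matrix.isUnit_iff_isUnit_det K).mp hK
  have hKK' : K⁻¹ * K = 1 := Matrix.nonsing_inv_mul K hKdet
  have hKK : K * K⁻¹ = 1 := Matrix.mul_nonsing_inv K hKdet
  have ea : (!![a, 0; 0, b] : Matrix (Fin 2) (Fin 2) ℍ) 0 0 = a := by simp
  have e01 : (!![a, 0; 0, b] : Matrix (Fin 2) (Fin 2) ℍ) 0 1 = 0 := by simp
  have e10 : (!![a, 0; 0, b] : Matrix (Fin 2) (Fin 2) ℍ) 1 0 = 0 := by simp
  have e11 : (!![a, 0; 0, b] : Matrix (Fin 2) (Fin 2) ℍ) 1 1 = b := by simp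
  have heq2' : Q * rsmul (Uh n k) a * qmap K⁻¹ = Uh n k := by
    have h := heq2
    simp only [confAct, gaugeAct, ea, e10, Stmt5Aux.rsmul_zero_right, sub_zero] at h
    exact h
  have heq1' : Q * rsmul (Mh L M) b * qmap K⁻¹ = Mh L M := by
    have h := heq1
    simp only [confAct, gaugeAct, e11, e01, Stmt5Aux.rsmul_zero_right, sub_zero] at h
    exact h
  have hQU : Q * Uh n k = rsmul (Uh n k) (star a) * qmap K := by
    have h3 : rsmul (Q * Uh n k * qmap K⁻¹) a = Uh n k := by
      rw [← Stmt5Aux.rsmul_mul_qmap, ← Stmt5Aux.mul_rsmul]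
      exact heq2'
    have h4 : Q * Uh n k * qmap K⁻¹ = rsmul (Uh n k) (star a) := by
      have h5 := congrArg (fun X => rsmul X (star a)) h3
      simpa [Stmt5Aux.rsmul_rsmul, hna] using h5
    have h6 := congrArg (fun X => X * qmap K) h4
    simpa [Matrix.mul_assoc, ← Stmt5Aux.qmap_mul, hKK', Stmt5Aux.qmap_one] using h6
  have hQM : Q * Mh L M = rsmul (Mh L M) (star b) * qmap K := by
    have hnb' : star b * b = 1 := Stmt5Aux.unit_star_mul_self hb
    have h3 : rsmul (Q * Mh L M * qmap K⁻¹) b = Mh L M := by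
      rw [← Stmt5Aux.rsmul_mul_qmap, ← Stmt5Aux.mul_rsmul]
      exact heq1'
    have h4 : Q * Mh L M * qmap K⁻¹ = rsmul (Mh L M) (star b) := by
      have h5 := congrArg (fun X => rsmul X (star b)) h3
      simpa [Stmt5Aux.rsmul_rsmul, hnb] using h5
    have h6 := congrArg (fun X => X * qmap K) h4
    simpa [Matrix.mul_assoc, ← Stmt5Aux.qmap_mul, hKK', Stmt5Aux.qmap_one] using h6
  obtain ⟨A₁, B₁, C₁, D₁, hQb⟩ : ∃ A₁ B₁ C₁ D₁, Q = Matrix.fromBlocks A₁ B₁ C₁ D₁ :=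
    ⟨_, _, _, _, (Matrix.fromBlocks_toBlocks Q).symm⟩
  subst hQb
  -- decompose hQU
  have hL1 : Matrix.fromBlocks A₁ B₁ C₁ D₁ * Uh n k = Matrix.fromRows B₁ D₁ := by
    rw [Uh, Matrix.fromBlocks_mul_fromRows]
    simp
  have hR1 : rsmul (Uh n k) (star a) * qmap K
      = Matrix.fromRows 0 (lsmul (star a) (qmap K)) := by
    rw [Uh, Stmt5Aux.rsmul_fromRows, Matrix.fromRows_mul, Stmt5Aux.one_rsmul_mul]
    refine Matrix.ext fun i j => ?_
    simp [rsmul]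
  have hfr : Matrix.fromRows B₁ D₁ = Matrix.fromRows 0 (lsmul (star a) (qmap K)) := by
    rw [← hL1, hQU, hR1]
  have hB : B₁ = 0 := by
    refine Matrix.ext fun i j => ?_
    have h7 := congrFun (congrFun hfr (Sum.inl i)) j
    simpa using h7
  have hD : D₁ = lsmul (star a) (qmap K) := by
    refine Matrix.ext fun i j => ?_
    have h7 := congrFun (congrFun hfr (Sum.inr i)) j
    simpa using h7
  subst hB hD
  -- Sp block equations
  have hsp : (Matrix.fromBlocks A₁ 0 C₁ (lsmul (star a) (qmap K)))ᴴ
      * Matrix.fromBlocks A₁ 0 C₁ (lsmul (star a) (qmap K)) = 1 := hQ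
  rw [Matrix.fromBlocks_conjTranspose, Matrix.fromBlocks_multiply,
    ← Matrix.fromBlocks_one] at hsp
  obtain ⟨h11, h12, h21, h22⟩ := Matrix.fromBlocks_inj.mp hsp
  have hDHD : (lsmul (star a) (qmap K))ᴴ * lsmul (star a) (qmap K) = qmap (Kᵀ * K) := by
    rw [Stmt5Aux.lsmul_conjTranspose, Stmt5Aux.qmap_conjTranspose, star_star,
      Stmt5Aux.rsmul_mul_lsmul _ _ _ _ hna, ← Stmt5Aux.qmap_mul]
  have goal1 : Kᵀ * K = 1 := by
    apply Stmt5Aux.qmap_inj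
    rw [Stmt5Aux.qmap_one, ← hDHD]
    simpa using h22
  have hKKt : K * Kᵀ = 1 := mul_eq_one_comm.mp goal1
  have hDunit : (lsmul (star a) (qmap K))ᴴ * lsmul (star a) (qmap K) = 1 := by
    rw [hDHD, goal1, Stmt5Aux.qmap_one]
  -- C₁ = 0
  have hDD' : lsmul (star a) (qmap K) * rsmul (qmap K⁻¹) a = 1 := by
    rw [Stmt5Aux.lsmul_mul_rsmul, ← Stmt5Aux.qmap_mul, hKK, Stmt5Aux.qmap_one,
      Stmt5Aux.lsmul_rsmul_one _ _ hna']
  have h12' : C₁ᴴ * lsmul (star a) (qmap K) = 0 := by simpa using h12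
  have hCH : C₁ᴴ = 0 := by
    calc C₁ᴴ = C₁ᴴ * (lsmul (star a) (qmap K) * rsmul (qmap K⁻¹) a) := by
          rw [hDD', Matrix.mul_one]
      _ = (C₁ᴴ * lsmul (star a) (qmap K)) * rsmul (qmap K⁻¹) a := by rw [Matrix.mul_assoc]
      _ = 0 := by rw [h12', Matrix.zero_mul]
  have hC : C₁ = 0 := by
    rw [← Matrix.conjTranspose_conjTranspose C₁, hCH, Matrix.conjTranspose_zero]
  subst hC
  have h11' : A₁ᴴ * A₁ = 1 := by simpa using h11
  -- decompose hQM
  have hQM2 : Matrix.fromRows (A₁ * L) (lsmul (star a) (qmap K) * M)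
      = Matrix.fromRows (rsmul L (star b) * qmap K) (rsmul M (star b) * qmap K) := by
    have hlhs : Matrix.fromBlocks A₁ 0 0 (lsmul (star a) (qmap K)) * Mh L M
        = Matrix.fromRows (A₁ * L) (lsmul (star a) (qmap K) * M) := by
      rw [Mh, Matrix.fromBlocks_mul_fromRows]
      simp
    have hrhs : rsmul (Mh L M) (star b) * qmap K
        = Matrix.fromRows (rsmul L (star b) * qmap K) (rsmul M (star b) * qmap K) := by
      rw [Mh, Stmt5Aux.rsmul_fromRows, Matrix.fromRows_mul]
    rw [← hlhs, hQM, hrhs]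
  have hAL : A₁ * L = rsmul L (star b) * qmap K := by
    refine Matrix.ext fun i j => ?_
    have h7 := congrFun (congrFun hQM2 (Sum.inl i)) j
    simpa using h7
  have hDM : lsmul (star a) (qmap K) * M = rsmul M (star b) * qmap K := by
    refine Matrix.ext fun i j => ?_
    have h7 := congrFun (congrFun hQM2 (Sum.inr i)) j
    simpa using h7
  -- goal 2
  have hLL : Lᴴ * L = qmap Kᵀ * lsmul b (rsmul (Lᴴ * L) (star b)) * qmap K := by
    have e1 : (A₁ * L)ᴴ * (A₁ * L) = Lᴴ * L := by
      rw [Matrix.conjTranspose_mul, Matrix.mul_assoc, ← Matrix.mul_assoc A₁ᴴ A₁ L, h11',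
        Matrix.one_mul]
    calc Lᴴ * L = (A₁ * L)ᴴ * (A₁ * L) := e1.symm
      _ = (rsmul L (star b) * qmap K)ᴴ * (rsmul L (star b) * qmap K) := by rw [hAL]
      _ = qmap Kᵀ * lsmul (star (star b)) (rsmul (Lᴴ * L) (star b)) * qmap K :=
          Stmt5Aux.conj_eq' L (star b) K
      _ = qmap Kᵀ * lsmul b (rsmul (Lᴴ * L) (star b)) * qmap K := by rw [star_star]
  have hMM : Mᴴ * M = qmap Kᵀ * lsmul b (rsmul (Mᴴ * M) (star b)) * qmap K := by
    have e1 : (lsmul (star a) (qmap K) * M)ᴴ * (lsmul (star a) (qmap K) * M) = Mᴴ * M := by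
      rw [Matrix.conjTranspose_mul, Matrix.mul_assoc,
        ← Matrix.mul_assoc (lsmul (star a) (qmap K))ᴴ, hDunit, Matrix.one_mul]
    calc Mᴴ * M = (lsmul (star a) (qmap K) * M)ᴴ * (lsmul (star a) (qmap K) * M) := e1.symm
      _ = (rsmul M (star b) * qmap K)ᴴ * (rsmul M (star b) * qmap K) := by rw [hDM]
      _ = qmap Kᵀ * lsmul (star (star b)) (rsmul (Mᴴ * M) (star b)) * qmap K :=
          Stmt5Aux.conj_eq' M (star b) K
      _ = qmap Kᵀ * lsmul b (rsmul (Mᴴ * M) (star b)) * qmap K := by rw [star_star]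
  have hRc : (Lᴴ * L + Mᴴ * M) = qmap Kᵀ * (Lᴴ * L + Mᴴ * M) * qmap K := by
    conv_lhs => rw [hLL, hMM]
    rw [← Matrix.add_mul, ← Matrix.mul_add, ← Stmt5Aux.lsmul_add, ← Stmt5Aux.rsmul_add,
      Stmt5Aux.real_conj_eq hRreal hnb]
  have goal2 : (Lᴴ * L + Mᴴ * M) * qmap K = qmap K * (Lᴴ * L + Mᴴ * M) := by
    calc (Lᴴ * L + Mᴴ * M) * qmap K
        = (qmap K * qmap Kᵀ) * (Lᴴ * L + Mᴴ * M) * qmap K := by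
          rw [← Stmt5Aux.qmap_mul, hKKt, Stmt5Aux.qmap_one, Matrix.one_mul]
      _ = qmap K * (qmap Kᵀ * (Lᴴ * L + Mᴴ * M) * qmap K) := by
          rw [Matrix.mul_assoc, Matrix.mul_assoc, Matrix.mul_assoc]
      _ = qmap K * (Lᴴ * L + Mᴴ * M) := by rw [← hRc]
  -- goal 3
  have hLLH : (L * Lᴴ)ᴴ = L * Lᴴ := by
    rw [Matrix.conjTranspose_mul, Matrix.conjTranspose_conjTranspose]
  have hLLunit : IsUnit (L * Lᴴ) := Stmt5Aux.isUnit_of_posdef _ hLLH hLpos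
  have hA₁ : A₁ = rsmul L (star b) * qmap K * Lᴴ * Ring.inverse (L * Lᴴ) := by
    have h5 : A₁ * (L * Lᴴ) = rsmul L (star b) * qmap K * Lᴴ := by
      rw [← Matrix.mul_assoc, hAL]
    calc A₁ = A₁ * ((L * Lᴴ) * Ring.inverse (L * Lᴴ)) := by
          rw [Ring.mul_inverse_cancel _ hLLunit, Matrix.mul_one]
      _ = (A₁ * (L * Lᴴ)) * Ring.inverse (L * Lᴴ) := (Matrix.mul_assoc A₁ (L * Lᴴ) _).symm
      _ = _ := by rw [h5]
  exact ⟨goal1, goal2, by rw [hA₁]⟩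
end
end

section
/- Let M̂ ∈ M_{n,k} and let t ∈ [0,1] be irrational. Then M̂ has circular t-symmetry if and only if M̂ has toral symmetry. -/
open Matrix

noncomputable section

namespace Stmt7
open Quaternion Matrix

lemma eI_mul (a b : ℝ) : eI a * eI b = eI (a + b) := by
  ext
  · rw [Quaternion.re_mul]; simp [eI, Real.cos_add]
  · rw [Quaternion.imI_mul]; simp [eI, Real.sin_add]; ring
  · rw [Quaternion.imJ_mul]; simp [eI]
  · rw [Quaternion.imK_mul]; simp [eI]

lemma eI_comm (a b : ℝ) : eI a * eI b = eI b * eI a := by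
  rw [eI_mul, eI_mul, add_comm]

lemma eI_zero : eI 0 = 1 := by
  ext <;> simp [eI]

lemma normSq_eI (a : ℝ) : normSq (eI a) = 1 := by
  rw [normSq_def']; simp [eI]

lemma star_eI_mul (a : ℝ) : star (eI a) * eI a = 1 := by
  rw [Quaternion.star_mul_self, normSq_eI]; norm_num

lemma eI_per (x : ℝ) (m : ℤ) : eI (x + m * (2 * Real.pi)) = eI x := by
  ext
  · simp [eI, Real.cos_add_int_mul_two_pi]
  · simp [eI, Real.sin_add_int_mul_two_pi]
  · simp [eI]
  · simp [eI]

end Stmt7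
namespace Stmt7

lemma qmap_eq {I J : Type*} (K : Matrix I J ℝ) : qmap K = K.map (algebraMap ℝ ℍ) := by
  simp [qmap, Quaternion.algebraMap_def]

lemma qmap_one {I : Type*} [Fintype I] [DecidableEq I] : qmap (1 : Matrix I I ℝ) = 1 := by
  rw [qmap_eq]
  exact Matrix.map_one _ (map_zero _) (map_one _)

lemma qmap_mul {I J K' : Type*} [Fintype J] (A : Matrix I J ℝ) (B : Matrix J K' ℝ) :
    qmap (A * B) = qmap A * qmap B := by
  rw [qmap_eq, qmap_eq, qmap_eq]
  exact Matrix.map_mul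

lemma qmap_inj {I J : Type*} {A B : Matrix I J ℝ} (h : qmap A = qmap B) : A = B := by
  ext i j : 1
  have := congrFun (congrFun h i) j
  simpa [qmap, Quaternion.coe_inj] using this

lemma qmap_conjTranspose {I J : Type*} (K : Matrix I J ℝ) : (qmap K)ᴴ = qmap Kᵀ := by
  ext i j : 1
  simp [qmap, Matrix.conjTranspose_apply, Matrix.transpose_apply]

lemma mul_rsmul {I J K' : Type*} [Fintype J] (A : Matrix I J ℍ) (B : Matrix J K' ℍ) (x : ℍ) :
    A * rsmul B x = rsmul (A * B) x := by
  ext i j : 1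
  simp [rsmul, Matrix.mul_apply, Finset.sum_mul, mul_assoc]

lemma rsmul_qmap {I J K' : Type*} [Fintype J] (A : Matrix I J ℍ) (K : Matrix J K' ℝ) (x : ℍ) :
    rsmul A x * qmap K = rsmul (A * qmap K) x := by
  ext i j : 1
  simp only [rsmul, qmap, Matrix.mul_apply, Matrix.map_apply]
  rw [Finset.sum_mul]
  refine Finset.sum_congr rfl fun l _ => ?_
  rw [mul_assoc, mul_assoc, Quaternion.coe_commutes]

lemma rsmul_rsmul {I J : Type*} (A : Matrix I J ℍ) (x y : ℍ) :
    rsmul (rsmul A x) y = rsmul A (x * y) := by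
  ext i j : 1; simp [rsmul, mul_assoc]

lemma rsmul_one {I J : Type*} (A : Matrix I J ℍ) : rsmul A 1 = A := by
  ext i j : 1; simp [rsmul]

lemma rsmul_zero {I J : Type*} (A : Matrix I J ℍ) : rsmul A 0 = 0 := by
  ext i j : 1; simp [rsmul]

end Stmt7
namespace Stmt7
open Matrix

lemma re_sum {I : Type*} (s : Finset I) (f : I → ℍ) :
    (∑ l ∈ s, f l).re = ∑ l ∈ s, (f l).re := by
  induction s using Finset.cons_induction with
  | empty => simp [Quaternion.re_zero]
  | cons a s ha ih => simp [Finset.sum_cons, ih]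

lemma re_mul_real (r : ℝ) (q : ℍ) : ((r : ℍ) * q).re = r * q.re := by
  simp [Quaternion.re_mul]

lemma mul_real_re (q : ℍ) (r : ℝ) : (q * (r : ℍ)).re = q.re * r := by
  simp [Quaternion.re_mul]

lemma isUnit_det_of_qmap_unit {I : Type*} [Fintype I] [DecidableEq I] {A : Matrix I I ℝ}
    (h : IsUnit (qmap A)) : IsUnit A.det := by
  obtain ⟨X, h1⟩ := h.exists_right_inv
  set Xr : Matrix I I ℝ := Matrix.of fun i j => (X i j).re with hXr
  have h2 : A * Xr = 1 := by
    ext i j : 1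
    have h3 := congrFun (congrFun h1 i) j
    have h4 : ((qmap A * X) i j).re = (A * Xr) i j := by
      simp only [Matrix.mul_apply, qmap, Matrix.map_apply, re_sum, re_mul_real, hXr, Matrix.of_apply]
    rw [← h4, h3]
    by_cases hij : i = j <;> simp [Matrix.one_apply, hij, Quaternion.re_one, Quaternion.re_zero]
  have h5 : A.det * Xr.det = 1 := by rw [← Matrix.det_mul, h2, Matrix.det_one]
  exact IsUnit.of_mul_eq_one _ h5

variable {n k : ℕ}

lemma U_mul (X : Matrix (Fin k) (Fin k) ℍ) : Uh n k * X = Matrix.fromRows 0 X := by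
  rw [Uh, Matrix.fromRows_mul]; simp

lemma mul_U (Q : Matrix (Fin n ⊕ Fin k) (Fin n ⊕ Fin k) ℍ) :
    Q * Uh n k = Q.toCols₂ := by
  conv_lhs => rw [← Matrix.fromCols_toCols Q]
  rw [Uh, Matrix.fromCols_mul_fromRows]
  simp

lemma Mh_gram (L : Matrix (Fin n) (Fin k) ℍ) (M : Matrix (Fin k) (Fin k) ℍ) :
    (Mh L M)ᴴ * Mh L M = Lᴴ * L + Mᴴ * M := by
  rw [Mh, Matrix.conjTranspose_fromRows_eq_fromCols_conjTranspose,
    Matrix.fromCols_mul_fromRows]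

lemma rsmul_gram {I J : Type*} [Fintype I] [DecidableEq J] (A : Matrix I J ℍ) (d : ℝ)
    (hreal : IsRealMatrix (Aᴴ * A)) :
    (rsmul A (eI d))ᴴ * rsmul A (eI d) = Aᴴ * A := by
  ext i j : 1
  have h1 : ((rsmul A (eI d))ᴴ * rsmul A (eI d)) i j
      = star (eI d) * ((Aᴴ * A) i j) * eI d := by
    simp only [Matrix.mul_apply, Matrix.conjTranspose_apply, rsmul, Matrix.map_apply, StarMul.star_mul,
      Finset.mul_sum, Finset.sum_mul]
    exact Finset.sum_congr rfl fun l _ => by simp [mul_assoc]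
  rw [h1, hreal i j, mul_assoc, Quaternion.coe_commutes, ← mul_assoc, star_eI_mul, one_mul]

end Stmt7
namespace Stmt7
open Matrix

variable {n k : ℕ} (L : Matrix (Fin n) (Fin k) ℍ) (M : Matrix (Fin k) (Fin k) ℍ)

lemma confAct_diag (a d : ℍ) :
    confAct !![a, 0; 0, d] (Mh L M, Uh n k) = (rsmul (Mh L M) d, rsmul (Uh n k) a) := by
  simp [confAct, rsmul_zero]

lemma equiv_iff (a d : ℍ) :
    Equivariant L M !![a, 0; 0, d] ↔
    ∃ (Q : Matrix (Fin n ⊕ Fin k) (Fin n ⊕ Fin k) ℍ) (K : Matrix (Fin k) (Fin k) ℝ), IsSp Q ∧ IsUnit K ∧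
      Q * rsmul (Mh L M) d = Mh L M * qmap K ∧
      Q * rsmul (Uh n k) a = Uh n k * qmap K := by
  unfold Equivariant gaugeAct
  rw [confAct_diag]
  constructor
  · rintro ⟨Q, K, hQ, hK, h1, h2⟩
    have hinv : qmap K⁻¹ * qmap K = 1 := by
      rw [← qmap_mul, Matrix.nonsing_inv_mul K ((Matrix.isUnit_iff_isUnit_det K).mp hK), qmap_one]
    refine ⟨Q, K, hQ, hK, ?_, ?_⟩
    · calc Q * rsmul (Mh L M) d = Q * rsmul (Mh L M) d * (qmap K⁻¹ * qmap K) := by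
            rw [hinv, Matrix.mul_one]
        _ = (Q * rsmul (Mh L M) d * qmap K⁻¹) * qmap K := by
            rw [Matrix.mul_assoc (Q * rsmul (Mh L M) d)]
        _ = Mh L M * qmap K := by rw [h1]
    · calc Q * rsmul (Uh n k) a = Q * rsmul (Uh n k) a * (qmap K⁻¹ * qmap K) := by
            rw [hinv, Matrix.mul_one]
        _ = (Q * rsmul (Uh n k) a * qmap K⁻¹) * qmap K := by
            rw [Matrix.mul_assoc (Q * rsmul (Uh n k) a)]
        _ = Uh n k * qmap K := by rw [h2]
  · rintro ⟨Q, K, hQ, hK, h1, h2⟩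
    have hinv : qmap K * qmap K⁻¹ = 1 := by
      rw [← qmap_mul, Matrix.mul_nonsing_inv K ((Matrix.isUnit_iff_isUnit_det K).mp hK), qmap_one]
    refine ⟨Q, K, hQ, hK, ?_, ?_⟩
    · dsimp only; rw [h1, Matrix.mul_assoc, hinv, Matrix.mul_one]
    · dsimp only; rw [h2, Matrix.mul_assoc, hinv, Matrix.mul_one]

/-- The candidate real gauge matrix determined by `Q` and the quaternion `x`. -/
def kap (Q : Matrix (Fin n ⊕ Fin k) (Fin n ⊕ Fin k) ℍ) (x : ℍ) : Matrix (Fin k) (Fin k) ℝ :=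
  Matrix.of fun i j => (Q (Sum.inr i) (Sum.inr j) * x).re

lemma eq2_entry {Q : Matrix (Fin n ⊕ Fin k) (Fin n ⊕ Fin k) ℍ} {K : Matrix (Fin k) (Fin k) ℝ}
    {x : ℍ} (h : Q * rsmul (Uh n k) x = Uh n k * qmap K) (i j : Fin k) :
    (K i j : ℍ) = Q (Sum.inr i) (Sum.inr j) * x := by
  rw [mul_rsmul, mul_U, U_mul] at h
  have := congrFun (congrFun h (Sum.inr i)) j
  simpa [rsmul, Matrix.toCols₂, qmap] using this.symm

lemma kap_spec {Q : Matrix (Fin n ⊕ Fin k) (Fin n ⊕ Fin k) ℍ} {K : Matrix (Fin k) (Fin k) ℝ}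
    {x : ℍ} (h : Q * rsmul (Uh n k) x = Uh n k * qmap K) : K = kap Q x := by
  ext i j : 1
  have h1 := eq2_entry h i j
  have : (K i j : ℍ).re = (Q (Sum.inr i) (Sum.inr j) * x).re := by rw [h1]
  simpa [kap, Quaternion.re_coe] using this

/-- Inverse-free reformulation of equivariance under `diag(eI φ₁, eI φ₂)`. -/
def Good (φ : ℝ × ℝ) : Prop :=
  ∃ Q : Matrix (Fin n ⊕ Fin k) (Fin n ⊕ Fin k) ℍ, IsSp Q ∧
    Q * rsmul (Mh L M) (eI φ.2) = Mh L M * qmap (kap Q (eI φ.1)) ∧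
    Q * rsmul (Uh n k) (eI φ.1) = Uh n k * qmap (kap Q (eI φ.1))

lemma good_of_equiv {φ : ℝ × ℝ} (h : Equivariant L M !![eI φ.1, 0; 0, eI φ.2]) :
    Good L M φ := by
  rw [equiv_iff] at h
  obtain ⟨Q, K, hQ, hK, h1, h2⟩ := h
  have hk := kap_spec h2
  exact ⟨Q, hQ, by rw [← hk]; exact h1, by rw [← hk]; exact h2⟩

lemma equiv_of_good (hM : InM L M) {φ : ℝ × ℝ} (h : Good L M φ) :
    Equivariant L M !![eI φ.1, 0; 0, eI φ.2] := by
  obtain ⟨Q, hQ, h1, h2⟩ := h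
  obtain ⟨hMsym, hpos, hreal, hunit, hdelta⟩ := hM
  set K := kap Q (eI φ.1) with hKdef
  rw [equiv_iff]
  refine ⟨Q, K, hQ, ?_, h1, h2⟩
  -- show `IsUnit K`
  set Rq : Matrix (Fin k) (Fin k) ℍ := Lᴴ * L + Mᴴ * M with hRq
  set Rr : Matrix (Fin k) (Fin k) ℝ := Matrix.of fun i j => (Rq i j).re with hRrdef
  have hq : qmap Rr = Rq := by
    ext i j : 1
    exact (hreal i j).symm
  have hrealM : IsRealMatrix ((Mh L M)ᴴ * Mh L M) := by
    rw [Mh_gram]; exact hreal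
  have e2 : (Q * rsmul (Mh L M) (eI φ.2))ᴴ * (Q * rsmul (Mh L M) (eI φ.2)) = Rq := by
    rw [Matrix.conjTranspose_mul, Matrix.mul_assoc, ← Matrix.mul_assoc Qᴴ Q, hQ,
      Matrix.one_mul, rsmul_gram _ _ hrealM, Mh_gram]
  have e1 : (Mh L M * qmap K)ᴴ * (Mh L M * qmap K) = qmap Kᵀ * Rq * qmap K := by
    rw [Matrix.conjTranspose_mul, qmap_conjTranspose, Matrix.mul_assoc,
      ← Matrix.mul_assoc ((Mh L M)ᴴ), Mh_gram, ← hRq, ← Matrix.mul_assoc]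
  have key : qmap (Kᵀ * Rr * K) = qmap Rr := by
    rw [qmap_mul, qmap_mul, hq, ← e1, ← h1, e2]
  have hre : Kᵀ * Rr * K = Rr := qmap_inj key
  have hdet := congrArg Matrix.det hre
  rw [Matrix.det_mul, Matrix.det_mul, Matrix.det_transpose] at hdet
  have hRdet : IsUnit Rr.det := isUnit_det_of_qmap_unit (by rw [hq]; exact hunit)
  have hne : Rr.det ≠ 0 := hRdet.ne_zero
  have h7 : (K.det * K.det) * Rr.det = 1 * Rr.det := by
    rw [one_mul]; linear_combination hdet
  have h6 : K.det * K.det = 1 := mul_right_cancel₀ hne h7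
  exact (Matrix.isUnit_iff_isUnit_det K).mpr (IsUnit.of_mul_eq_one _ h6)

end Stmt7
namespace Stmt7
open Matrix

variable {n k : ℕ} (L : Matrix (Fin n) (Fin k) ℍ) (M : Matrix (Fin k) (Fin k) ℍ)

lemma comp_step {A : Matrix (Fin n ⊕ Fin k) (Fin k) ℍ}
    {Q Q' : Matrix (Fin n ⊕ Fin k) (Fin n ⊕ Fin k) ℍ} {K K' : Matrix (Fin k) (Fin k) ℝ}
    {x y : ℝ} (hb : Q' * rsmul A (eI y) = A * qmap K') (ha : Q * rsmul A (eI x) = A * qmap K) :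
    (Q * Q') * rsmul A (eI (x + y)) = A * qmap (K * K') := by
  have hxy : eI (x + y) = eI y * eI x := by rw [eI_mul, add_comm]
  rw [hxy, ← rsmul_rsmul, Matrix.mul_assoc, mul_rsmul Q', hb, ← rsmul_qmap,
    ← Matrix.mul_assoc, ha, Matrix.mul_assoc, ← qmap_mul]

lemma good_add {φ ψ : ℝ × ℝ} (h1 : Good L M φ) (h2 : Good L M ψ) : Good L M (φ + ψ) := by
  obtain ⟨Q, hQ, a1, a2⟩ := h1
  obtain ⟨Q', hQ', b1, b2⟩ := h2
  have hsp : IsSp (Q * Q') := by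
    unfold IsSp at *
    rw [Matrix.conjTranspose_mul, Matrix.mul_assoc, ← Matrix.mul_assoc Qᴴ Q, hQ,
      Matrix.one_mul, hQ']
  have c1 := comp_step b1 a1
  have c2 := comp_step b2 a2
  have hk := kap_spec c2
  refine ⟨Q * Q', hsp, ?_, ?_⟩
  · simp only [Prod.fst_add, Prod.snd_add]; rw [← hk]; exact c1
  · simp only [Prod.fst_add]; rw [← hk]; exact c2

lemma good_congr {φ ψ : ℝ × ℝ} (h1 : eI φ.1 = eI ψ.1) (h2 : eI φ.2 = eI ψ.2)
    (h : Good L M φ) : Good L M ψ := by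
  obtain ⟨Q, hQ, a1, a2⟩ := h
  exact ⟨Q, hQ, by rw [← h1, ← h2]; exact a1, by rw [← h1]; exact a2⟩

end Stmt7
namespace Stmt7
open Matrix Filter Topology

lemma continuous_eI : Continuous eI := by
  have h : eI = fun θ => (Real.cos θ : ℍ) + Real.sin θ • qi := by
    funext θ; ext <;> simp [eI, qi] <;> erw [QuaternionAlgebra.smul_mk] <;> simp
  rw [h]
  exact (Quaternion.continuous_coe.comp Real.continuous_cos).add
    (Real.continuous_sin.smul continuous_const)

variable {n k : ℕ} (L : Matrix (Fin n) (Fin k) ℍ) (M : Matrix (Fin k) (Fin k) ℍ)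

abbrev MatQ (n k : ℕ) := Matrix (Fin n ⊕ Fin k) (Fin n ⊕ Fin k) ℍ

lemma sp_entry_norm {Q : MatQ n k} (hQ : IsSp Q) (p c : Fin n ⊕ Fin k) : ‖Q p c‖ ≤ 1 := by
  have h2 : ∑ a, Quaternion.normSq (Q a c) = 1 := by
    have h1 := congrFun (congrFun hQ c) c
    have h3 := congrArg QuaternionAlgebra.re h1
    simpa [Matrix.mul_apply, Matrix.conjTranspose_apply, re_sum, Quaternion.star_mul_self,
      Matrix.one_apply, Quaternion.re_coe, Quaternion.re_one, Quaternion.re_zero] using h3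
  have h4 : Quaternion.normSq (Q p c) ≤ 1 := by
    rw [← h2]
    exact Finset.single_le_sum (f := fun a => Quaternion.normSq (Q a c))
      (fun a _ => Quaternion.normSq_nonneg) (Finset.mem_univ p)
  have h5 := Quaternion.normSq_eq_norm_mul_self (Q p c)
  nlinarith [norm_nonneg (Q p c)]

instance : FirstCountableTopology (MatQ n k) :=
  inferInstanceAs (FirstCountableTopology ((Fin n ⊕ Fin k) → (Fin n ⊕ Fin k) → ℍ))

lemma good_closed : IsClosed {φ : ℝ × ℝ | Good L M φ} := by
  apply IsSeqClosed.isClosed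
  intro f φ hf hlim
  choose Qs hQs hA hB using hf
  set C : Set (MatQ n k) := {Q | ∀ p q, ‖Q p q‖ ≤ 1} with hC
  have hCc : IsCompact C := by
    have hCeq : C = Set.univ.pi (fun _ : Fin n ⊕ Fin k =>
        (Set.univ.pi (fun _ : Fin n ⊕ Fin k => Metric.closedBall (0:ℍ) 1))) := by
      ext Q
      simp only [hC, Set.mem_setOf_eq]
      constructor
      · intro h
        intro p _
        intro q _
        simpa [dist_zero_right] using h p q
      · intro h p q
        simpa [dist_zero_right] using h p (Set.mem_univ p) q (Set.mem_univ q)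
    rw [hCeq]
    exact isCompact_univ_pi fun p => isCompact_univ_pi fun q => isCompact_closedBall _ _
  have hmem : ∀ m, Qs m ∈ C := fun m p q => sp_entry_norm (hQs m) p q
  obtain ⟨Q, hQC, g, hg, hconv⟩ := hCc.tendsto_subseq hmem
  have hQsp : IsSp Q := by
    have hcont : Continuous (fun Q : MatQ n k => Qᴴ * Q) :=
      (continuous_id.matrix_conjTranspose).matrix_mul continuous_id
    have h1 : Tendsto (fun m => (Qs (g m))ᴴ * Qs (g m)) atTop (𝓝 (Qᴴ * Q)) :=
      (hcont.tendsto Q).comp hconv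
    have h2 : (fun m => (Qs (g m))ᴴ * Qs (g m)) = fun _ => (1 : MatQ n k) :=
      funext fun m => hQs (g m)
    rw [h2] at h1
    exact tendsto_nhds_unique h1 tendsto_const_nhds
  have hφg : Tendsto (fun m => f (g m)) atTop (𝓝 φ) := hlim.comp hg.tendsto_atTop
  have hz : Tendsto (fun m => (f (g m), Qs (g m))) atTop (𝓝 (φ, Q)) :=
    hφg.prodMk_nhds hconv
  have hentry : ∀ (p q : Fin n ⊕ Fin k),
      Continuous (fun z : (ℝ × ℝ) × MatQ n k => z.2 p q) := fun p q =>
    (continuous_apply q).comp ((continuous_apply p).comp continuous_snd)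
  have hkapc : Continuous (fun z : (ℝ × ℝ) × MatQ n k => qmap (kap z.2 (eI z.1.1))) := by
    apply continuous_matrix; intro i j
    exact Quaternion.continuous_coe.comp (Quaternion.continuous_re.comp
      ((hentry _ _).mul (continuous_eI.comp (continuous_fst.comp continuous_fst))))
  have hrs1 : Continuous (fun z : (ℝ × ℝ) × MatQ n k => rsmul (Mh L M) (eI z.1.2)) := by
    apply continuous_matrix; intro i j
    exact continuous_const.mul (continuous_eI.comp (continuous_snd.comp continuous_fst))
  have hrs2 : Continuous (fun z : (ℝ × ℝ) × MatQ n k => rsmul (Uh n k) (eI z.1.1)) := by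
    apply continuous_matrix; intro i j
    exact continuous_const.mul (continuous_eI.comp (continuous_fst.comp continuous_fst))
  have hF1 : Continuous (fun z : (ℝ × ℝ) × MatQ n k =>
      z.2 * rsmul (Mh L M) (eI z.1.2) - Mh L M * qmap (kap z.2 (eI z.1.1))) :=
    (continuous_snd.matrix_mul hrs1).sub (continuous_const.matrix_mul hkapc)
  have hF2 : Continuous (fun z : (ℝ × ℝ) × MatQ n k =>
      z.2 * rsmul (Uh n k) (eI z.1.1) - Uh n k * qmap (kap z.2 (eI z.1.1))) :=
    (continuous_snd.matrix_mul hrs2).sub (continuous_const.matrix_mul hkapc)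
  have e1 : Q * rsmul (Mh L M) (eI φ.2) - Mh L M * qmap (kap Q (eI φ.1)) = 0 := by
    have h1 := (hF1.tendsto ((φ, Q) : (ℝ × ℝ) × MatQ n k)).comp hz
    have h2 : ((fun z : (ℝ × ℝ) × MatQ n k =>
        z.2 * rsmul (Mh L M) (eI z.1.2) - Mh L M * qmap (kap z.2 (eI z.1.1))) ∘
        (fun m => (f (g m), Qs (g m)))) = fun _ => 0 :=
      funext fun m => sub_eq_zero_of_eq (hA (g m))
    rw [h2] at h1
    exact tendsto_nhds_unique h1 tendsto_const_nhds
  have e2 : Q * rsmul (Uh n k) (eI φ.1) - Uh n k * qmap (kap Q (eI φ.1)) = 0 := by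
    have h1 := (hF2.tendsto ((φ, Q) : (ℝ × ℝ) × MatQ n k)).comp hz
    have h2 : ((fun z : (ℝ × ℝ) × MatQ n k =>
        z.2 * rsmul (Uh n k) (eI z.1.1) - Uh n k * qmap (kap z.2 (eI z.1.1))) ∘
        (fun m => (f (g m), Qs (g m)))) = fun _ => 0 :=
      funext fun m => sub_eq_zero_of_eq (hB (g m))
    rw [h2] at h1
    exact tendsto_nhds_unique h1 tendsto_const_nhds
  exact ⟨Q, hQsp, sub_eq_zero.mp e1, sub_eq_zero.mp e2⟩

end Stmt7
/-- For irrational `t ∈ [0,1]`, circular `t`-symmetry is equivalent to toral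
symmetry. -/
theorem stmt7 {n k : ℕ} (L : Matrix (Fin n) (Fin k) ℍ) (M : Matrix (Fin k) (Fin k) ℍ)
    (hM : InM L M) (t : ℝ) (ht0 : 0 ≤ t) (ht1 : t ≤ 1) (hirr : Irrational t) :
    CircularSym L M t ↔ ToralSym L M := by
  constructor
  · intro h φ₁ φ₂
    have hline : ∀ θ : ℝ, Stmt7.Good L M (θ, t * θ) := fun θ =>
      Stmt7.good_of_equiv L M (h θ)
    have hzero : ∀ x : ℝ, x ∈ (AddSubgroup.closure {t, 1} : AddSubgroup ℝ) →
        Stmt7.Good L M (0, 2 * Real.pi * x) := by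
      intro x hx
      rw [AddSubgroup.mem_closure_pair] at hx
      obtain ⟨m', n', hmn⟩ := hx
      have h1 := hline (2 * Real.pi * m')
      refine Stmt7.good_congr L M ?_ ?_ h1
      · show eI (2 * Real.pi * m') = eI 0
        have h2 := Stmt7.eI_per 0 m'
        rw [← h2]; congr 1; ring
      · show eI (t * (2 * Real.pi * m')) = eI (2 * Real.pi * x)
        have h2 := Stmt7.eI_per (t * (2 * Real.pi * m')) n'
        rw [← h2]; congr 1
        rw [← hmn]
        simp only [zsmul_eq_mul, smul_eq_mul, mul_one]
        ring
    have hT : IsClosed {x : ℝ | Stmt7.Good L M (0, 2 * Real.pi * x)} := by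
      have hc : Continuous fun x : ℝ => (((0 : ℝ), 2 * Real.pi * x) : ℝ × ℝ) := by
        exact continuous_const.prodMk (continuous_const.mul continuous_id)
      exact (Stmt7.good_closed L M).preimage hc
    have hdense : Dense ((AddSubgroup.closure {t, 1} : AddSubgroup ℝ) : Set ℝ) := by
      rcases AddSubgroup.dense_or_cyclic (AddSubgroup.closure {t, 1}) with hd | ⟨a, ha⟩
      · exact hd
      · exfalso
        have h1 : t ∈ AddSubgroup.closure ({t, 1} : Set ℝ) :=
          AddSubgroup.subset_closure (by simp)
        have h2 : (1 : ℝ) ∈ AddSubgroup.closure ({t, 1} : Set ℝ) :=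
          AddSubgroup.subset_closure (by simp)
        rw [ha, AddSubgroup.mem_closure_singleton] at h1 h2
        obtain ⟨mt, hmt⟩ := h1
        obtain ⟨mo, hmo⟩ := h2
        simp only [zsmul_eq_mul] at hmt hmo
        have hmo0 : mo ≠ 0 := by
          rintro rfl; simp at hmo
        have hmoR : (mo : ℝ) ≠ 0 := Int.cast_ne_zero.mpr hmo0
        refine hirr ⟨(mt : ℚ) / (mo : ℚ), ?_⟩
        push_cast
        rw [div_eq_iff hmoR]
        linear_combination (mo : ℝ) * hmt - (mt : ℝ) * hmo
    have hstepA : ∀ c : ℝ, Stmt7.Good L M (0, c) := by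
      intro c
      have h2 : closure ((AddSubgroup.closure {t, 1} : AddSubgroup ℝ) : Set ℝ) ⊆
          {x : ℝ | Stmt7.Good L M (0, 2 * Real.pi * x)} :=
        closure_minimal (fun x hx => hzero x hx) hT
      have h3 : Stmt7.Good L M (0, 2 * Real.pi * (c / (2 * Real.pi))) := by
        refine h2 ?_
        rw [hdense.closure_eq]
        trivial
      have h4 : 2 * Real.pi * (c / (2 * Real.pi)) = c := by
        field_simp
      rwa [h4] at h3
    have hB := Stmt7.good_add L M (hline φ₁) (hstepA (φ₂ - t * φ₁))
    have h5 : (((φ₁, t * φ₁) : ℝ × ℝ) + ((0, φ₂ - t * φ₁) : ℝ × ℝ)) = (φ₁, φ₂) := by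
      simp [Prod.ext_iff]
    rw [h5] at hB
    exact @Stmt7.equiv_of_good n k L M hM (φ₁, φ₂) hB
  · intro h θ
    exact h θ (t * θ)
end
end
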